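/- arXiv:1507.05506 — 7 statements merged into one kernel-verified Lean document; each statement's English description precedes it below -/
import Mathlib

section
/- Let d = gcd(n₁-1, n₂-1). The quantity (n₁-1)(n₂-1)/d² is even if and only if n₁n₂ ≡ d+1 (mod 2d). -/
/-!
Write `n₁ = d f + 1` and `n₂ = d f' + 1` with `f, f'` coprime; then
`n₁ n₂ = d (d f f' + f + f') + 1`, so the congruence says that `d f f' + f + f'` is odd.
Since `d` is even this means `f + f'` is odd, and as `f, f'` are not both even, that
happens exactly when `f f'` is even.
-/

theorem Nat.Coprime.even_mul_iff_odd_add {f g : ℕ} (h : f.Coprime g) :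
    Even (f * g) ↔ Odd (f + g) := by
  have not_both_even : ¬ (Even f ∧ Even g) := fun ⟨hf, hg⟩ =>
    Nat.not_even_one (h ▸ even_iff_two_dvd.2 (Nat.dvd_gcd hf.two_dvd hg.two_dvd))
  rw [Nat.even_mul, Nat.odd_add, ← Nat.not_even_iff_odd]
  tauto

theorem Nat.mul_add_one_modEq_add_one_iff_odd {d k : ℕ} (hd : d ≠ 0) :
    d * k + 1 ≡ d + 1 [MOD 2 * d] ↔ Odd k := by
  have cancel : d * k + 1 ≡ d * 1 + 1 [MOD d * 2] ↔ k ≡ 1 [MOD 2] :=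
    (show _ ↔ _ from ⟨Nat.ModEq.add_right_cancel' 1, Nat.ModEq.add_right 1⟩).trans
      (Nat.ModEq.mul_left_cancel_iff' hd)
  rw [mul_one, mul_comm d 2] at cancel
  exact cancel.trans Nat.odd_iff.symm

theorem Nat.mul_add_one_mul_modEq_iff_even_mul {d f g : ℕ} (hd : d ≠ 0) (hd_even : Even d)
    (hfg : f.Coprime g) :
    (d * f + 1) * (d * g + 1) ≡ d + 1 [MOD 2 * d] ↔ Even (f * g) := by
  obtain ⟨e, rfl⟩ := hd_even
  have expand : ((e + e) * f + 1) * ((e + e) * g + 1) =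
      (e + e) * (2 * (e * f * g) + (f + g)) + 1 := by ring
  rw [expand, Nat.mul_add_one_modEq_add_one_iff_odd hd, Nat.odd_add',
    iff_true_intro (even_two_mul _), iff_true,
    hfg.even_mul_iff_odd_add]

theorem even_iff_product_congruence_general (n₁ n₂ d : ℕ)
    (ho₁ : Odd n₁) (ho₂ : Odd n₂)
    (hd : d = Nat.gcd (n₁ - 1) (n₂ - 1)) :
    Even ((n₁ - 1) * (n₂ - 1) / d ^ 2) ↔ n₁ * n₂ ≡ d + 1 [MOD 2 * d] := by
  obtain rfl | hd₀ := eq_or_ne d 0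
  · obtain ⟨h₁, h₂⟩ := Nat.gcd_eq_zero_iff.1 hd.symm
    obtain rfl : n₁ = 1 := by have := ho₁.pos; omega
    obtain rfl : n₂ = 1 := by have := ho₂.pos; omega
    simp
  have hd₁ : d ∣ n₁ - 1 := hd ▸ Nat.gcd_dvd_left _ _
  have hd₂ : d ∣ n₂ - 1 := hd ▸ Nat.gcd_dvd_right _ _
  have hd_even : Even d := hd ▸ even_iff_two_dvd.2
    (Nat.dvd_gcd (Nat.Odd.sub_odd ho₁ odd_one).two_dvd (Nat.Odd.sub_odd ho₂ odd_one).two_dvd)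
  have hcop : ((n₁ - 1) / d).Coprime ((n₂ - 1) / d) :=
    hd ▸ Nat.coprime_div_gcd_div_gcd (hd ▸ Nat.pos_of_ne_zero hd₀)
  have h₁ : n₁ = d * ((n₁ - 1) / d) + 1 := by
    rw [Nat.mul_div_cancel' hd₁]; have := ho₁.pos; omega
  have h₂ : n₂ = d * ((n₂ - 1) / d) + 1 := by
    rw [Nat.mul_div_cancel' hd₂]; have := ho₂.pos; omega
  rw [sq, ← Nat.div_mul_div_comm hd₁ hd₂,
    ← Nat.mul_add_one_mul_modEq_iff_even_mul hd₀ hd_even hcop, ← h₁, ← h₂]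

/-- Let `d = gcd(n₁-1, n₂-1)`. Then `(n₁-1)(n₂-1)/d²` is even iff
`n₁n₂ ≡ d+1 (mod 2d)`. -/
theorem even_iff_product_congruence (n₁ n₂ d : ℕ)
    (hp₁ : n₁.Prime) (hp₂ : n₂.Prime) (ho₁ : Odd n₁) (ho₂ : Odd n₂) (hne : n₁ ≠ n₂)
    (hd : d = Nat.gcd (n₁ - 1) (n₂ - 1)) :
    Even ((n₁ - 1) * (n₂ - 1) / d ^ 2) ↔ n₁ * n₂ ≡ d + 1 [MOD 2 * d] :=
  even_iff_product_congruence_general n₁ n₂ d ho₁ ho₂ hd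
end

section
/- Each Whiteman cyclotomic class W_j, when reduced modulo n₁, covers each element of {1, 2, ..., n₁-1} exactly (n₂-1)/d times. -/
/-!
Modulo `n₁` we have `u ≡ g`, so `g ^ s * u ^ j ≡ g ^ (s + j)`, and since `g` is a primitive root
modulo `n₁` the value `a` is hit exactly for the exponents `s` in one residue class modulo
`n₁ - 1`. The range `0 ≤ s < e = (n₁ - 1) * ((n₂ - 1) / d)` consists of `(n₂ - 1) / d` full
periods, each containing one such `s`.
-/

open Finset

theorem Nat.card_filter_range_mul_modEq {m : ℕ} (hm : 0 < m) (k v : ℕ) :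
    #{s ∈ range (m * k) | s ≡ v [MOD m]} = k := by
  rw [← Nat.count_eq_card_filter_range, Nat.count_modEq_card _ hm, Nat.mul_div_cancel_left _ hm,
    Nat.mul_mod_right, if_neg (Nat.not_lt_zero _), add_zero]

theorem FiniteField.exists_pow_eq_iff_modEq {K : Type*} [Field K] [Fintype K] {γ a : K}
    (hγ : orderOf γ = Fintype.card K - 1) (ha : a ≠ 0) :
    ∃ t, ∀ s, γ ^ s = a ↔ s ≡ t [MOD Fintype.card K - 1] := by
  have : NeZero (Fintype.card K - 1) := ⟨by have := Fintype.one_lt_card (α := K); omega⟩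
  have hprim : IsPrimitiveRoot γ (Fintype.card K - 1) := hγ ▸ IsPrimitiveRoot.orderOf γ
  obtain ⟨t, -, rfl⟩ := hprim.eq_pow_of_pow_eq_one (FiniteField.pow_card_sub_one_eq_one a ha)
  have hfin : IsOfFinOrder γ := orderOf_pos_iff.mp (hγ ▸ Nat.pos_of_neZero _)
  exact ⟨t, fun s => hγ ▸ hfin.pow_eq_pow_iff_modEq⟩

theorem whitemanClass_mod_count_general (n₁ n₂ n d e : ℕ)
    (hp₁ : n₁.Prime)
    (hn : n = n₁ * n₂) (hd : d = Nat.gcd (n₁ - 1) (n₂ - 1))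
    (he : e = (n₁ - 1) * (n₂ - 1) / d)
    (g u : ℕ)
    (hg₁ : orderOf (g : ZMod n₁) = n₁ - 1)
    (hu₁ : u ≡ g [MOD n₁])
    (j : ℕ) (a : ℕ) (ha₁ : 1 ≤ a) (ha₂ : a ≤ n₁ - 1) :
    ((Finset.range e).filter (fun s => (g ^ s * u ^ j) % n % n₁ = a)).card =
      (n₂ - 1) / d := by
  have : Fact n₁.Prime := ⟨hp₁⟩
  have hn₁ := hp₁.two_le
  have hlt : a < n₁ := by omega
  set γ : ZMod n₁ := (g : ZMod n₁)
  have hmod_eq : ∀ s, (g ^ s * u ^ j) % n % n₁ = a ↔ γ ^ s * γ ^ j = a := by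
    intro s
    rw [Nat.mod_mod_of_dvd _ ⟨n₂, hn⟩, ← Nat.mod_eq_of_lt hlt, ← ZMod.natCast_eq_natCast_iff',
      Nat.cast_mul, Nat.cast_pow, Nat.cast_pow, (ZMod.natCast_eq_natCast_iff _ _ _).mpr hu₁,
      Nat.mod_eq_of_lt hlt]
  have ha : (a : ZMod n₁) ≠ 0 := by
    rw [Ne, ZMod.natCast_eq_zero_iff]
    exact fun h => absurd (Nat.le_of_dvd ha₁ h) (by omega)
  have hγj : γ ^ j ≠ 0 := pow_ne_zero j fun h => by
    rw [h, orderOf_zero] at hg₁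
    omega
  obtain ⟨t, ht⟩ := FiniteField.exists_pow_eq_iff_modEq (a := a / γ ^ j)
    (by rwa [ZMod.card]) (div_ne_zero ha hγj)
  rw [ZMod.card] at ht
  have he' : e = (n₁ - 1) * ((n₂ - 1) / d) := by
    rw [he, Nat.mul_div_assoc _ (hd ▸ Nat.gcd_dvd_right _ _)]
  rw [he', filter_congr (q := (· ≡ t [MOD n₁ - 1])) fun s _ => by
      rw [hmod_eq, ← ht, eq_div_iff hγj],
    Nat.card_filter_range_mul_modEq (by omega)]

/-- Each Whiteman cyclotomic class `W_j = {g^s u^j mod n : 0 ≤ s ≤ e-1}`, reduced modulo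
`n₁`, covers each element of `{1, …, n₁-1}` exactly `(n₂-1)/d` times. -/
theorem whitemanClass_mod_count (n₁ n₂ n d e : ℕ)
    (hp₁ : n₁.Prime) (hp₂ : n₂.Prime) (ho₁ : Odd n₁) (ho₂ : Odd n₂) (hne : n₁ ≠ n₂)
    (hn : n = n₁ * n₂) (hd : d = Nat.gcd (n₁ - 1) (n₂ - 1))
    (he : e = (n₁ - 1) * (n₂ - 1) / d)
    (g u : ℕ)
    (hg₁ : orderOf (g : ZMod n₁) = n₁ - 1) (hg₂ : orderOf (g : ZMod n₂) = n₂ - 1)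
    (hu₁ : u ≡ g [MOD n₁]) (hu₂ : u ≡ 1 [MOD n₂])
    (j : ℕ) (hj : j < d) (a : ℕ) (ha₁ : 1 ≤ a) (ha₂ : a ≤ n₁ - 1) :
    ((Finset.range e).filter (fun s => (g ^ s * u ^ j) % n % n₁ = a)).card =
      (n₂ - 1) / d :=
  whitemanClass_mod_count_general n₁ n₂ n d e hp₁ hn hd he g u hg₁ hu₁ j a ha₁ ha₂
end

section
/- For each cyclotomic class W_j (0 ≤ j ≤ d-1) and each t ∈ Q, the sum of β^{it} over i ∈ W_j equals -((n₂-1)/d) mod p in GF(q^m) ⊇ GF(q) of characteristic p. -/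
/-!
Since `β ^ t = (β ^ n₂) ^ k` is an `n₁`-th root of unity other than `1`, the summand `β ^ (i t)`
only depends on `i mod n₁`, through the nontrivial additive character `ψ a = (β ^ t) ^ a.val` of
`ZMod n₁`. The exponent `s` of `g ^ s u ^ j` is determined modulo `n₁ - 1` by its reduction mod
`n₁` and modulo `n₂ - 1` by its reduction mod `n₂`, hence modulo `e = lcm (n₁ - 1) (n₂ - 1)`, so
`W_j` has `e` distinct elements. Mod `n₁` they are `g ^ (s + j)`, and as `g` is a primitive root
these run `e / (n₁ - 1) = (n₂ - 1) / d` times through the nonzero residues. Summing `ψ` over the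
nonzero residues gives `0 - ψ 0 = -1`.
-/

/-- The Whiteman generalized cyclotomic class `W_i = {g^s u^i mod n : 0 ≤ s ≤ e-1}`. -/
def whitemanClass (n e : ℕ) (g u : ZMod n) (i : ℕ) : Finset (ZMod n) :=
  (Finset.range e).image (fun s => g ^ s * u ^ i)

open Finset

theorem Function.Periodic.sum_range_mul {M : Type*} [AddCommMonoid M] {f : ℕ → M} {k : ℕ}
    (hf : Function.Periodic f k) (c : ℕ) :
    ∑ s ∈ range (k * c), f s = c • ∑ s ∈ range k, f s := by
  induction c with
  | zero => simp
  | succ c ih =>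
    rw [Nat.mul_succ, sum_range_add, ih, succ_nsmul]
    congr 1
    refine sum_congr rfl fun s _ => ?_
    rw [add_comm, mul_comm]
    exact hf.nat_mul c s

theorem sum_range_orderOf_pow_add_eq_sum_erase_zero {M₀ A : Type*} [MonoidWithZero M₀]
    [Nontrivial M₀] [Fintype M₀] [DecidableEq M₀] [AddCommMonoid A] {a : M₀}
    (ha : orderOf a = Fintype.card M₀ - 1) (f : M₀ → A) (j : ℕ) :
    ∑ s ∈ range (orderOf a), f (a ^ (s + j)) = ∑ x ∈ univ.erase 0, f x := by
  have hfin : IsOfFinOrder a := orderOf_pos_iff.mp (ha ▸ Nat.sub_pos_of_lt Fintype.one_lt_card)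
  have hinj : Set.InjOn (fun s => a ^ (s + j)) (range (orderOf a)) := by
    intro x hx y hy hxy
    exact (Nat.ModEq.add_right_cancel' j (hfin.pow_eq_pow_iff_modEq.mp hxy)).eq_of_lt_of_lt
      (mem_range.mp hx) (mem_range.mp hy)
  have himage : (range (orderOf a)).image (fun s => a ^ (s + j)) = univ.erase 0 := by
    refine eq_of_subset_of_card_le (fun x hx => ?_) ?_
    · obtain ⟨s, -, rfl⟩ := mem_image.mp hx
      exact mem_erase.mpr ⟨(hfin.isUnit.pow _).ne_zero, mem_univ _⟩
    · rw [card_image_of_injOn hinj, card_range, card_erase_of_mem (mem_univ _), card_univ, ha]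
  rw [← himage, sum_image hinj]

theorem sum_range_orderOf_mul_pow_add_eq_nsmul_sum_erase_zero {M₀ A : Type*} [MonoidWithZero M₀]
    [Nontrivial M₀] [Fintype M₀] [DecidableEq M₀] [AddCommMonoid A] {a : M₀}
    (ha : orderOf a = Fintype.card M₀ - 1) (f : M₀ → A) (j c : ℕ) :
    ∑ s ∈ range (orderOf a * c), f (a ^ (s + j)) = c • ∑ x ∈ univ.erase 0, f x := by
  have hperiodic : Function.Periodic (fun s => f (a ^ (s + j))) (orderOf a) := by
    intro s
    simp only [add_right_comm s, pow_add _ (s + j), pow_orderOf_eq_one, mul_one]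
  rw [hperiodic.sum_range_mul, sum_range_orderOf_pow_add_eq_sum_erase_zero ha]

section

variable {M N₁ N₂ F₁ F₂ : Type*} [Monoid M] [Monoid N₁] [Monoid N₂]
  [FunLike F₁ M N₁] [MonoidHomClass F₁ M N₁] [FunLike F₂ M N₂] [MonoidHomClass F₂ M N₂]

theorem modEq_orderOf_map_of_pow_mul_eq (φ : F₁) {a b : M} (ha : IsOfFinOrder (φ a))
    (hb : IsUnit (φ b)) {x y : ℕ} (h : a ^ x * b = a ^ y * b) : x ≡ y [MOD orderOf (φ a)] := by
  rw [← ha.pow_eq_pow_iff_modEq, ← map_pow, ← map_pow, ← hb.mul_left_inj, ← map_mul, ← map_mul, h]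

theorem injOn_pow_mul_range_lcm_orderOf_map (φ₁ : F₁) (φ₂ : F₂) {a b : M}
    (ha₁ : IsOfFinOrder (φ₁ a)) (ha₂ : IsOfFinOrder (φ₂ a)) (hb₁ : IsUnit (φ₁ b))
    (hb₂ : IsUnit (φ₂ b)) :
    Set.InjOn (fun s => a ^ s * b) (range (Nat.lcm (orderOf (φ₁ a)) (orderOf (φ₂ a)))) := by
  intro x hx y hy hxy
  exact (Nat.mod_lcm (modEq_orderOf_map_of_pow_mul_eq φ₁ ha₁ hb₁ hxy)
    (modEq_orderOf_map_of_pow_mul_eq φ₂ ha₂ hb₂ hxy)).eq_of_lt_of_lt (mem_range.mp hx)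
    (mem_range.mp hy)

end

theorem AddChar.sum_erase_zero_eq_neg_one {R R' : Type*} [AddGroup R] [Fintype R] [DecidableEq R]
    [CommRing R'] [IsDomain R'] {ψ : AddChar R R'} (hψ : ψ ≠ 1) :
    ∑ a ∈ univ.erase 0, ψ a = -1 := by
  rw [sum_erase_eq_sub (mem_univ 0), sum_eq_zero_of_ne_one hψ, map_zero_eq_one, zero_sub]

theorem AddChar.zmodChar_castHom {C : Type*} [CommMonoid C] {m n : ℕ} [NeZero m] [NeZero n]
    (h : m ∣ n) {ζ : C} (hζ : ζ ^ m = 1) (x : ZMod n) :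
    zmodChar m hζ (ZMod.castHom h (ZMod m) x) = ζ ^ x.val := by
  rw [ZMod.castHom_apply, ZMod.cast_eq_val, zmodChar_apply']

theorem AddChar.zmodChar_pow_ne_one {C : Type*} [CommMonoid C] {m k : ℕ} [NeZero m] {ζ : C}
    (hζ : IsPrimitiveRoot ζ m) (hk₀ : k ≠ 0) (hkm : k < m) (h : (ζ ^ k) ^ m = 1) :
    zmodChar m h ≠ 1 := by
  rw [zmod_char_ne_one_iff, ← Nat.cast_one, zmodChar_apply', pow_one]
  exact hζ.pow_ne_one_of_pos_of_lt hk₀ hkm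

theorem castHom_natCast_pow_mul_pow {n₁ n : ℕ} (h : n₁ ∣ n) {g u : ℕ} (hu : u ≡ g [MOD n₁])
    (s j : ℕ) :
    ZMod.castHom h (ZMod n₁) ((g : ZMod n) ^ s * (u : ZMod n) ^ j) = (g : ZMod n₁) ^ (s + j) := by
  rw [map_mul, map_pow, map_pow, map_natCast, map_natCast,
    (ZMod.natCast_eq_natCast_iff u g n₁).mpr hu, pow_add]

theorem injOn_natCast_pow_mul_pow {n₁ n₂ n : ℕ} (hn₁ : n₁ ∣ n) (hn₂ : n₂ ∣ n) {g u : ℕ}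
    (hg₁ : IsOfFinOrder (g : ZMod n₁)) (hg₂ : IsOfFinOrder (g : ZMod n₂))
    (hu₁ : u ≡ g [MOD n₁]) (hu₂ : u ≡ 1 [MOD n₂]) (j : ℕ) :
    Set.InjOn (fun s => (g : ZMod n) ^ s * (u : ZMod n) ^ j)
      (range (Nat.lcm (orderOf (g : ZMod n₁)) (orderOf (g : ZMod n₂)))) := by
  have h₁ : (u : ZMod n₁) = g := (ZMod.natCast_eq_natCast_iff u g n₁).mpr hu₁
  have h₂ : (u : ZMod n₂) = 1 := by simpa using (ZMod.natCast_eq_natCast_iff u 1 n₂).mpr hu₂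
  simpa only [map_natCast] using injOn_pow_mul_range_lcm_orderOf_map
    (ZMod.castHom hn₁ (ZMod n₁)) (ZMod.castHom hn₂ (ZMod n₂)) (a := (g : ZMod n))
    (by rwa [map_natCast]) (by rwa [map_natCast])
    (by rw [map_pow, map_natCast, h₁]; exact hg₁.isUnit.pow j)
    (by rw [map_pow, map_natCast, h₂, one_pow]; exact isUnit_one)

theorem sum_whitemanClass_Q_general {K : Type*} [Field K]
    (n₁ n₂ n d e : ℕ)
    (hp₂ : n₂.Prime)
    (hn : n = n₁ * n₂) (hd : d = Nat.gcd (n₁ - 1) (n₂ - 1))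
    (he : e = (n₁ - 1) * (n₂ - 1) / d)
    (g u : ℕ)
    (hg₁ : orderOf (g : ZMod n₁) = n₁ - 1) (hg₂ : orderOf (g : ZMod n₂) = n₂ - 1)
    (hu₁ : u ≡ g [MOD n₁]) (hu₂ : u ≡ 1 [MOD n₂])
    (β : K) (hβ : IsPrimitiveRoot β n)
    (j : ℕ) (t k : ℕ) (ht : t = k * n₂) (hk₁ : 1 ≤ k) (hk₂ : k ≤ n₁ - 1) :
    ∑ i ∈ whitemanClass n e (g : ZMod n) (u : ZMod n) j, β ^ (i.val * t) =
      -(((n₂ - 1) / d : ℕ) : K) := by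
  have hn₂ := hp₂.two_le
  have : NeZero n₁ := ⟨by omega⟩
  have : NeZero n := ⟨by rw [hn]; exact mul_ne_zero (NeZero.ne n₁) (by omega)⟩
  have : Nontrivial (ZMod n₁) := ZMod.nontrivial_iff.mpr (by omega)
  have hζ : IsPrimitiveRoot (β ^ n₂) n₁ := hβ.pow (NeZero.pos n) (by rw [hn, mul_comm])
  have hγ : ((β ^ n₂) ^ k) ^ n₁ = 1 := by rw [pow_right_comm, hζ.pow_eq_one, one_pow]
  have hψ := AddChar.zmodChar_pow_ne_one hζ (by omega) (by omega) hγ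
  have hn₁ : n₁ ∣ n := hn ▸ dvd_mul_right n₁ n₂
  have hinj := injOn_natCast_pow_mul_pow hn₁ (hn ▸ dvd_mul_left n₂ n₁)
    (orderOf_pos_iff.mp (by omega)) (orderOf_pos_iff.mp (by omega)) hu₁ hu₂ j
  have hterm : ∀ x : ZMod n,
      β ^ (x.val * t) = AddChar.zmodChar n₁ hγ (ZMod.castHom hn₁ (ZMod n₁) x) := by
    intro x
    rw [AddChar.zmodChar_castHom, ← pow_mul, ← pow_mul, ht]
    ring_nf
  have hec : e = orderOf (g : ZMod n₁) * ((n₂ - 1) / d) := by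
    rw [he, hg₁, Nat.mul_div_assoc _ (hd ▸ Nat.gcd_dvd_right _ _)]
  have hlcm : e = Nat.lcm (orderOf (g : ZMod n₁)) (orderOf (g : ZMod n₂)) := by
    rw [hg₁, hg₂, he, hd]; rfl
  rw [whitemanClass, sum_image (hlcm ▸ hinj), hec]
  simp only [hterm, castHom_natCast_pow_mul_pow hn₁ hu₁]
  rw [sum_range_orderOf_mul_pow_add_eq_nsmul_sum_erase_zero (hg₁.trans (by rw [ZMod.card])),
    AddChar.sum_erase_zero_eq_neg_one hψ, nsmul_eq_mul, mul_neg_one]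

/-- For each cyclotomic class `W_j` and each `t ∈ Q = {kn₂ : 1 ≤ k ≤ n₁-1}`,
`∑_{i ∈ W_j} β^{it} = -((n₂-1)/d)` in a field of characteristic `p` with `p ∤ n`. -/
theorem sum_whitemanClass_Q {K : Type*} [Field K] (p : ℕ) [CharP K p]
    (n₁ n₂ n d e : ℕ)
    (hp₁ : n₁.Prime) (hp₂ : n₂.Prime) (ho₁ : Odd n₁) (ho₂ : Odd n₂) (hne : n₁ ≠ n₂)
    (hn : n = n₁ * n₂) (hd : d = Nat.gcd (n₁ - 1) (n₂ - 1))
    (he : e = (n₁ - 1) * (n₂ - 1) / d)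
    (g u : ℕ)
    (hg₁ : orderOf (g : ZMod n₁) = n₁ - 1) (hg₂ : orderOf (g : ZMod n₂) = n₂ - 1)
    (hu₁ : u ≡ g [MOD n₁]) (hu₂ : u ≡ 1 [MOD n₂])
    (β : K) (hβ : IsPrimitiveRoot β n) (hpn : ¬ p ∣ n)
    (j : ℕ) (hj : j < d) (t k : ℕ) (ht : t = k * n₂) (hk₁ : 1 ≤ k) (hk₂ : k ≤ n₁ - 1) :
    ∑ i ∈ whitemanClass n e (g : ZMod n) (u : ZMod n) j, β ^ (i.val * t) =
      -(((n₂ - 1) / d : ℕ) : K) :=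
  sum_whitemanClass_Q_general n₁ n₂ n d e hp₂ hn hd he g u hg₁ hg₂ hu₁ hu₂ β hβ j t k ht hk₁ hk₂
end

section
/- Let d = 6 divide both n₁-1 and n₂-1 with gcd(n₁-1,n₂-1) = 6, and η = (n₁-1)(n₂-1)/36. Then -1 (mod n) lies in W_0 if η is odd, and -1 lies in W_3 if η is even. -/
theorem pow_eq_neg_one_of_orderOf_eq_two_mul {R : Type*} [CommRing R] [NoZeroDivisors R]
    {x : R} {k : ℕ} (hk : k ≠ 0) (h : orderOf x = 2 * k) : x ^ k = -1 := by
  have hsq : x ^ k * x ^ k = 1 := by rw [← pow_add, ← two_mul, ← h, pow_orderOf_eq_one]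
  refine (mul_self_eq_one_iff.mp hsq).resolve_left fun h1 => hk ?_
  have := Nat.le_of_dvd (Nat.pos_of_ne_zero hk) (h ▸ orderOf_dvd_of_pow_eq_one h1)
  omega

theorem pow_eq_neg_one_of_modEq {R : Type*} [CommRing R] [NoZeroDivisors R]
    {x : R} {k m : ℕ} (hk : k ≠ 0) (h : orderOf x = 2 * k) (hm : m ≡ k [MOD 2 * k]) :
    x ^ m = -1 :=
  (pow_eq_pow_of_modEq hm (h ▸ pow_orderOf_eq_one x)).trans
    (pow_eq_neg_one_of_orderOf_eq_two_mul hk h)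

theorem Nat.mul_modEq_of_odd {a b : ℕ} (hb : Odd b) : a * b ≡ a [MOD 2 * a] := by
  obtain ⟨c, rfl⟩ := hb
  calc a * (2 * c + 1) = a + 2 * a * c := by ring
    _ ≡ a [MOD 2 * a] := add_modulus_mul_modEq_iff.mpr rfl

theorem Nat.exists_add_three_modEq_and_modEq {a b : ℕ} (ha : a ≠ 0) (hab : a.Coprime b)
    (heven : Even (a * b)) :
    ∃ s, s + 3 ≡ 3 * a [MOD 2 * (3 * a)] ∧ s ≡ 3 * b [MOD 2 * (3 * b)] := by
  have hpar : a % 2 + b % 2 = 1 := by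
    have hboth : ¬(2 ∣ a ∧ 2 ∣ b) := fun h =>
      not_coprime_of_dvd_of_dvd one_lt_two h.1 h.2 hab
    rcases even_mul.mp heven with h | h <;> rw [even_iff_two_dvd] at h <;> omega
  -- `9a - 3` stands for `3a - 3`, shifted by `6a` so that the subtraction does not truncate.
  have hcompat : 9 * a - 3 ≡ 3 * b [MOD gcd (2 * (3 * a)) (2 * (3 * b))] := by
    rw [gcd_mul_left, gcd_mul_left, hab, ModEq]
    omega
  obtain ⟨s, hs₁, hs₂⟩ := chineseRemainder' hcompat
  refine ⟨s, ?_, hs₂⟩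
  calc s + 3 ≡ 9 * a - 3 + 3 [MOD 2 * (3 * a)] := hs₁.add_right 3
    _ = 3 * a + 2 * (3 * a) := by omega
    _ ≡ 3 * a [MOD 2 * (3 * a)] := add_modEq_right

theorem ZMod.eq_of_castHom_eq_of_coprime {m n : ℕ} (hmn : m.Coprime n) {x y : ZMod (m * n)}
    (hm : castHom (dvd_mul_right m n) (ZMod m) x = castHom (dvd_mul_right m n) (ZMod m) y)
    (hn : castHom (dvd_mul_left n m) (ZMod n) x = castHom (dvd_mul_left n m) (ZMod n) y) :
    x = y :=
  (chineseRemainder hmn).injective <|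
    Prod.ext (by simpa [chineseRemainder] using hm) (by simpa [chineseRemainder] using hn)

theorem ZMod.natCast_pow_eq_one_of_coprime {m n g e : ℕ} (hmn : m.Coprime n)
    (hm : orderOf (g : ZMod m) ∣ e) (hn : orderOf (g : ZMod n) ∣ e) :
    (g : ZMod (m * n)) ^ e = 1 :=
  eq_of_castHom_eq_of_coprime hmn (by simpa using orderOf_dvd_iff_pow_eq_one.mp hm)
    (by simpa using orderOf_dvd_iff_pow_eq_one.mp hn)

theorem ZMod.natCast_pow_mul_pow_eq_neg_one {p q k l g u s i : ℕ} [Fact p.Prime]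
    [Fact q.Prime] (hpq : p ≠ q) (hk : k ≠ 0) (hl : l ≠ 0)
    (hg₁ : orderOf (g : ZMod p) = 2 * k) (hg₂ : orderOf (g : ZMod q) = 2 * l)
    (hu₁ : u ≡ g [MOD p]) (hu₂ : u ≡ 1 [MOD q])
    (hs₁ : s + i ≡ k [MOD 2 * k]) (hs₂ : s ≡ l [MOD 2 * l]) :
    (g : ZMod (p * q)) ^ s * (u : ZMod (p * q)) ^ i = -1 := by
  refine eq_of_castHom_eq_of_coprime ((Nat.coprime_primes Fact.out Fact.out).mpr hpq) ?_ ?_ <;>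
    simp only [map_mul, map_pow, map_natCast, map_neg, map_one]
  · rw [(natCast_eq_natCast_iff _ _ _).mpr hu₁, ← pow_add,
      pow_eq_neg_one_of_modEq hk hg₁ hs₁]
  · rw [(natCast_eq_natCast_iff' _ _ _).mpr hu₂, Nat.cast_one, one_pow, mul_one,
      pow_eq_neg_one_of_modEq hl hg₂ hs₂]

theorem mem_whitemanClass_of_pow_eq_one {n e : ℕ} {g u v : ZMod n} (he : 0 < e)
    (hge : g ^ e = 1) {s i : ℕ} (hv : g ^ s * u ^ i = v) : v ∈ whitemanClass n e g u i :=
  Finset.mem_image.mpr ⟨s % e, Finset.mem_range.mpr (Nat.mod_lt s he), by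
    rw [← pow_eq_pow_mod s hge, hv]⟩

theorem neg_one_mem_whitemanClass_general (n₁ n₂ n e η : ℕ)
    (hp₁ : n₁.Prime) (hp₂ : n₂.Prime) (hne : n₁ ≠ n₂)
    (hn : n = n₁ * n₂) (hd : Nat.gcd (n₁ - 1) (n₂ - 1) = 6)
    (he : e = (n₁ - 1) * (n₂ - 1) / 6) (hη : η = (n₁ - 1) * (n₂ - 1) / 36)
    (g u : ℕ)
    (hg₁ : orderOf (g : ZMod n₁) = n₁ - 1) (hg₂ : orderOf (g : ZMod n₂) = n₂ - 1)
    (hu₁ : u ≡ g [MOD n₁]) (hu₂ : u ≡ 1 [MOD n₂]) :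
    (Odd η → (-1 : ZMod n) ∈ whitemanClass n e (g : ZMod n) (u : ZMod n) 0) ∧
    (Even η → (-1 : ZMod n) ∈ whitemanClass n e (g : ZMod n) (u : ZMod n) 3) := by
  have := Fact.mk hp₁
  have := Fact.mk hp₂
  obtain ⟨a, b, hab, ha, hb⟩ := Nat.exists_coprime (n₁ - 1) (n₂ - 1)
  rw [hd] at ha hb
  have ha0 : a ≠ 0 := by have := hp₁.two_le; omega
  have hb0 : b ≠ 0 := by have := hp₂.two_le; omega
  replace he : e = 6 * (a * b) := by
    rw [he, ha, hb]; exact Nat.div_eq_of_eq_mul_left (by norm_num) (by ring)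
  replace hη : η = a * b := by
    rw [hη, ha, hb]; exact Nat.div_eq_of_eq_mul_left (by norm_num) (by ring)
  subst hn he hη
  have hord₁ : orderOf (g : ZMod n₁) = 2 * (3 * a) := by rw [hg₁, ha]; ring
  have hord₂ : orderOf (g : ZMod n₂) = 2 * (3 * b) := by rw [hg₂, hb]; ring
  have hge : (g : ZMod (n₁ * n₂)) ^ (6 * (a * b)) = 1 :=
    ZMod.natCast_pow_eq_one_of_coprime ((Nat.coprime_primes hp₁ hp₂).mpr hne)
      ⟨b, by rw [hord₁]; ring⟩ ⟨a, by rw [hord₂]; ring⟩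
  have hneg := fun s i => ZMod.natCast_pow_mul_pow_eq_neg_one (s := s) (i := i) hne
    (by omega) (by omega) hord₁ hord₂ hu₁ hu₂
  refine ⟨fun hodd => mem_whitemanClass_of_pow_eq_one (by positivity) hge
    (hneg (3 * (a * b)) 0 ?_ ?_), fun heven => ?_⟩
  · rw [add_zero, ← mul_assoc 3 a b]
    exact Nat.mul_modEq_of_odd (Nat.odd_mul.mp hodd).2
  · rw [mul_comm a b, ← mul_assoc 3 b a]
    exact Nat.mul_modEq_of_odd (Nat.odd_mul.mp hodd).1
  obtain ⟨s, hs₁, hs₂⟩ := Nat.exists_add_three_modEq_and_modEq ha0 hab heven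
  exact mem_whitemanClass_of_pow_eq_one (by positivity) hge (hneg s 3 hs₁ hs₂)

/-- With `gcd(n₁-1,n₂-1) = 6` and `η = (n₁-1)(n₂-1)/36`: `-1 ∈ W₀` if `η` is odd, and
`-1 ∈ W₃` if `η` is even. -/
theorem neg_one_mem_whitemanClass (n₁ n₂ n e η : ℕ)
    (hp₁ : n₁.Prime) (hp₂ : n₂.Prime) (ho₁ : Odd n₁) (ho₂ : Odd n₂) (hne : n₁ ≠ n₂)
    (hn : n = n₁ * n₂) (hd : Nat.gcd (n₁ - 1) (n₂ - 1) = 6)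
    (he : e = (n₁ - 1) * (n₂ - 1) / 6) (hη : η = (n₁ - 1) * (n₂ - 1) / 36)
    (g u : ℕ)
    (hg₁ : orderOf (g : ZMod n₁) = n₁ - 1) (hg₂ : orderOf (g : ZMod n₂) = n₂ - 1)
    (hu₁ : u ≡ g [MOD n₁]) (hu₂ : u ≡ 1 [MOD n₂]) :
    (Odd η → (-1 : ZMod n) ∈ whitemanClass n e (g : ZMod n) (u : ZMod n) 0) ∧
    (Even η → (-1 : ZMod n) ∈ whitemanClass n e (g : ZMod n) (u : ZMod n) 3) :=
  neg_one_mem_whitemanClass_general n₁ n₂ n e η hp₁ hp₂ hne hn hd he hη g u hg₁ hg₂ hu₁ hu₂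
end

section
/- Let S(x) = Σ_{i∈C₁} x^i over GF(q), where C₁ = P ∪ W₃ ∪ W₄ ∪ W₅. For t ∈ P, S(β^t) = -(n₁+1)/2 mod p, and for t ∈ Q, S(β^t) = (n₂-1)/2 mod p. -/
/-- The value at `x` of the polynomial `∑_{i ∈ P ∪ W_a ∪ W_b ∪ W_c} x^i`, where
`P = {kn₁ : 1 ≤ k ≤ n₂-1}`.  With `(a,b,c) = (3,4,5)` this is `S(x)`, with `(1,2,3)`
it is `T(x)`, and with `(2,3,4)` it is `U(x)`. -/
def STUval {K : Type*} [Field K] (n₁ n₂ n e : ℕ) (g u : ZMod n) (a b c : ℕ) (x : K) : K :=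
  (∑ k ∈ Finset.Icc 1 (n₂ - 1), x ^ (k * n₁)) +
    (∑ i ∈ whitemanClass n e g u a, x ^ i.val) +
    (∑ i ∈ whitemanClass n e g u b, x ^ i.val) +
    (∑ i ∈ whitemanClass n e g u c, x ^ i.val)

/-! At `x = β^t` the summand `x^i` depends only on `i mod m`, where `m = n₂` for `t ∈ P` and
`m = n₁` for `t ∈ Q`, and `β^t` is a primitive `m`-th root of unity. Since `g` has order
`e = lcm(n₁-1, n₂-1)` modulo `n`, each class `W_j` has `e` elements, and modulo `m` it runs
`e/(m-1)` times through the nonzero residues, over which the powers of a primitive `m`-th root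
sum to `-1`. So each `W_j` contributes `-(n₁-1)/6` resp. `-(n₂-1)/6`, and the part over `P`
contributes `-1` resp. `n₂ - 1`. -/

open Finset

theorem sum_range_mul_pow_of_pow_eq_one {G M : Type*} [Monoid G] [AddCommMonoid M]
    (φ : G → M) {g : G} {b : ℕ} (hb : g ^ b = 1) (a : ℕ) :
    ∑ s ∈ range (a * b), φ (g ^ s) = a • ∑ s ∈ range b, φ (g ^ s) := by
  induction a with
  | zero => simp
  | succ a ih =>
    rw [add_mul, one_mul, sum_range_add, ih, succ_nsmul]
    congr 1
    refine sum_congr rfl fun s _ => ?_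
    rw [pow_add, pow_mul', hb, one_pow, one_mul]

theorem sum_range_pow_mul_eq_sum_erase_zero {F M : Type*} [Field F] [Fintype F] [DecidableEq F]
    [AddCommMonoid M] {g : F} (hg : orderOf g = Fintype.card F - 1) {c : F} (hc : c ≠ 0)
    (φ : F → M) :
    ∑ s ∈ range (Fintype.card F - 1), φ (g ^ s * c) = ∑ x ∈ univ.erase 0, φ x := by
  have hinj : Set.InjOn (fun s => g ^ s * c) (range (Fintype.card F - 1)) := by
    intro x hx y hy h
    refine pow_injOn_Iio_orderOf ?_ ?_ (mul_right_cancel₀ hc h) <;> simp_all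
  have himage : (range (Fintype.card F - 1)).image (fun s => g ^ s * c) = univ.erase 0 := by
    refine eq_of_subset_of_card_le (fun x hx => ?_) ?_
    · obtain ⟨s, -, rfl⟩ := mem_image.mp hx
      have hg0 : g ≠ 0 := by
        have hpos : 0 < orderOf g := by rw [hg]; have := Fintype.one_lt_card (α := F); omega
        exact (orderOf_pos_iff.mp hpos).isUnit.ne_zero
      exact mem_erase.mpr ⟨mul_ne_zero (pow_ne_zero s hg0) hc, mem_univ _⟩
    · rw [card_image_of_injOn hinj, card_erase_of_mem (mem_univ _), card_univ, card_range]
  rw [← himage, sum_image hinj]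

theorem IsPrimitiveRoot.sum_pow_val_erase_zero {K : Type*} [CommRing K] [IsDomain K] {m : ℕ}
    [NeZero m] (hm : 1 < m) {ε : K} (hε : IsPrimitiveRoot ε m) :
    ∑ x ∈ univ.erase (0 : ZMod m), ε ^ x.val = -1 := by
  have hsum : ∑ x : ZMod m, ε ^ x.val = 0 := by
    obtain ⟨k, rfl⟩ : ∃ k, m = k + 1 := ⟨m - 1, by omega⟩
    rw [← hε.geom_sum_eq_zero hm]
    exact Fin.sum_univ_eq_sum_range (ε ^ ·) (k + 1)
  rw [sum_erase_eq_sub (mem_univ _), hsum, ZMod.val_zero, pow_zero, zero_sub]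

theorem pow_val_castHom {M : Type*} [Monoid M] {m n : ℕ} [NeZero n] (hmn : m ∣ n) {ε : M}
    (hε : ε ^ m = 1) (v : ZMod n) :
    ε ^ (ZMod.castHom hmn (ZMod m) v).val = ε ^ v.val := by
  rw [ZMod.castHom_apply, ZMod.cast_eq_val, ZMod.val_natCast, ← pow_eq_pow_mod _ hε]

theorem ZMod.orderOf_natCast_mul {m n : ℕ} (h : m.Coprime n) (g : ℕ) :
    orderOf (g : ZMod (m * n)) = (orderOf (g : ZMod m)).lcm (orderOf (g : ZMod n)) := by
  rw [← MulEquiv.orderOf_eq (ZMod.chineseRemainder h).toMulEquiv, RingEquiv.toMulEquiv_eq_coe,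
    RingEquiv.coe_toMulEquiv, map_natCast, Prod.orderOf, Prod.fst_natCast, Prod.snd_natCast]

theorem IsPrimitiveRoot.pow_mul_of_lt_prime {K : Type*} [CommMonoid K] {β : K} {a b k : ℕ}
    (hβ : IsPrimitiveRoot β (a * b)) (ha : a ≠ 0) (hb : b.Prime) (hk0 : k ≠ 0) (hkb : k < b) :
    IsPrimitiveRoot (β ^ (k * a)) b := by
  rw [mul_comm, pow_mul]
  exact (hβ.pow (Nat.pos_of_ne_zero (mul_ne_zero ha hb.ne_zero)) rfl).pow_of_coprime k
    (Nat.coprime_of_lt_prime hk0 hkb hb).symm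

theorem IsPrimitiveRoot.sum_Icc_pow {K : Type*} [CommRing K] [IsDomain K] {m : ℕ} (hm : 1 < m)
    {η : K} (hη : IsPrimitiveRoot η m) : ∑ k ∈ Icc 1 (m - 1), η ^ k = -1 := by
  have h := hη.geom_sum_eq_zero hm
  rw [range_eq_Ico, sum_eq_sum_Ico_succ_bot (by omega), pow_zero] at h
  have hIcc : Icc 1 (m - 1) = Ico 1 m := by ext; simp; omega
  rw [hIcc]
  linear_combination h

theorem sum_pow_val_whitemanClass {K : Type*} [CommRing K] [IsDomain K] {n m e a : ℕ} [NeZero n]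
    [Fact m.Prime] (hmn : m ∣ n) {ε : K} (hε : IsPrimitiveRoot ε m) {g u : ZMod n}
    (hg : orderOf g = e) (hu : IsUnit u) (hgm : orderOf (ZMod.castHom hmn (ZMod m) g) = m - 1)
    (he : e = a * (m - 1)) (j : ℕ) :
    ∑ i ∈ whitemanClass n e g u j, ε ^ i.val = -a := by
  set π := ZMod.castHom hmn (ZMod m)
  have hinj : Set.InjOn (fun s => g ^ s * u ^ j) (range e) := fun x hx y hy h =>
    pow_injOn_Iio_orderOf (by simp_all) (by simp_all) ((hu.pow j).mul_left_inj.mp h)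
  have hc : π (u ^ j) ≠ 0 := ((hu.pow j).map π).ne_zero
  have hπg : orderOf (π g) = Fintype.card (ZMod m) - 1 := by rw [ZMod.card, hgm]
  calc ∑ i ∈ whitemanClass n e g u j, ε ^ i.val
      = ∑ s ∈ range (a * (m - 1)), ε ^ (π g ^ s * π (u ^ j)).val := by
        rw [whitemanClass, sum_image hinj, he]
        refine sum_congr rfl fun s _ => ?_
        rw [← map_pow, ← map_mul, pow_val_castHom hmn hε.pow_eq_one]
    _ = a • ∑ s ∈ range (m - 1), ε ^ (π g ^ s * π (u ^ j)).val :=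
        sum_range_mul_pow_of_pow_eq_one (fun y => ε ^ (y * π (u ^ j)).val)
          (hgm ▸ pow_orderOf_eq_one (π g)) a
    _ = a • ∑ x ∈ univ.erase (0 : ZMod m), ε ^ x.val := by
        rw [← sum_range_pow_mul_eq_sum_erase_zero hπg hc, ZMod.card]
    _ = -a := by
        rw [hε.sum_pow_val_erase_zero (Fact.out : m.Prime).one_lt, nsmul_eq_mul, mul_neg_one]

theorem Sval_at_P_and_Q_general {K : Type*} [Field K]
    (n₁ n₂ n e : ℕ)
    (hp₁ : n₁.Prime) (hp₂ : n₂.Prime) (hne : n₁ ≠ n₂)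
    (hn : n = n₁ * n₂) (hd : Nat.gcd (n₁ - 1) (n₂ - 1) = 6)
    (he : e = (n₁ - 1) * (n₂ - 1) / 6)
    (g u : ℕ)
    (hg₁ : orderOf (g : ZMod n₁) = n₁ - 1) (hg₂ : orderOf (g : ZMod n₂) = n₂ - 1)
    (hu₁ : u ≡ g [MOD n₁]) (hu₂ : u ≡ 1 [MOD n₂])
    (β : K) (hβ : IsPrimitiveRoot β n) :
    (∀ k : ℕ, 1 ≤ k → k ≤ n₂ - 1 →
      STUval n₁ n₂ n e (g : ZMod n) (u : ZMod n) 3 4 5 (β ^ (k * n₁)) =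
        -(((n₁ + 1) / 2 : ℕ) : K)) ∧
    (∀ k : ℕ, 1 ≤ k → k ≤ n₁ - 1 →
      STUval n₁ n₂ n e (g : ZMod n) (u : ZMod n) 3 4 5 (β ^ (k * n₂)) =
        (((n₂ - 1) / 2 : ℕ) : K)) := by
  subst hn
  have : Fact n₁.Prime := ⟨hp₁⟩
  have : Fact n₂.Prime := ⟨hp₂⟩
  have : NeZero (n₁ * n₂) := ⟨mul_ne_zero hp₁.ne_zero hp₂.ne_zero⟩
  obtain ⟨m₁, hm₁⟩ : 6 ∣ n₁ - 1 := hd ▸ Nat.gcd_dvd_left _ _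
  obtain ⟨m₂, hm₂⟩ : 6 ∣ n₂ - 1 := hd ▸ Nat.gcd_dvd_right _ _
  have hcop : n₁.Coprime n₂ := (Nat.coprime_primes hp₁ hp₂).mpr hne
  have hg : orderOf (g : ZMod (n₁ * n₂)) = e := by
    rw [ZMod.orderOf_natCast_mul hcop, hg₁, hg₂, he, ← hd]
    rfl
  have hg_coprime : g.Coprime n₁ := (ZMod.isUnit_iff_coprime g n₁).mp
    (orderOf_pos_iff.mp (hg₁ ▸ Nat.sub_pos_of_lt hp₁.one_lt)).isUnit
  have hu : IsUnit (u : ZMod (n₁ * n₂)) := (ZMod.isUnit_iff_coprime _ _).mpr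
    (Nat.Coprime.mul_right (hu₁.gcd_eq.trans hg_coprime)
      (hu₂.gcd_eq.trans (Nat.gcd_one_left n₂)))
  have hW₁ : ∀ {ε : K}, IsPrimitiveRoot ε n₁ → ∀ j,
      ∑ i ∈ whitemanClass (n₁ * n₂) e g u j, ε ^ i.val = -m₂ := fun hε =>
    sum_pow_val_whitemanClass (dvd_mul_right n₁ n₂) hε hg hu (by rwa [map_natCast])
      (by rw [he, hm₂, mul_left_comm, Nat.mul_div_cancel_left _ (by norm_num), mul_comm])
  have hW₂ : ∀ {ε : K}, IsPrimitiveRoot ε n₂ → ∀ j,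
      ∑ i ∈ whitemanClass (n₁ * n₂) e g u j, ε ^ i.val = -m₁ := fun hε =>
    sum_pow_val_whitemanClass (dvd_mul_left n₂ n₁) hε hg hu (by rwa [map_natCast])
      (by rw [he, hm₁, mul_assoc, Nat.mul_div_cancel_left _ (by norm_num)])
  constructor
  · intro k hk1 hk2
    have hε := hβ.pow_mul_of_lt_prime hp₁.ne_zero hp₂ (k := k) (by omega) (by omega)
    have hP : ∑ k' ∈ Icc 1 (n₂ - 1), (β ^ (k * n₁)) ^ (k' * n₁) = -1 := by
      simp_rw [pow_mul' (β ^ (k * n₁))]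
      exact (hε.pow_of_coprime n₁ hcop).sum_Icc_pow hp₂.one_lt
    have hhalf : (n₁ + 1) / 2 = 3 * m₁ + 1 := by have := hp₁.pos; omega
    rw [STUval, hP, hW₂ hε, hW₂ hε, hW₂ hε, hhalf]
    push_cast
    ring
  · intro k hk1 hk2
    have hε := (mul_comm n₁ n₂ ▸ hβ).pow_mul_of_lt_prime hp₂.ne_zero hp₁ (k := k)
      (by omega) (by omega)
    have hP : ∑ k' ∈ Icc 1 (n₂ - 1), (β ^ (k * n₂)) ^ (k' * n₁) = (n₂ - 1 : ℕ) := by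
      simp_rw [pow_mul' (β ^ (k * n₂)), hε.pow_eq_one, one_pow]
      simp
    rw [STUval, hP, hW₁ hε, hW₁ hε, hW₁ hε, show (n₂ - 1) / 2 = 3 * m₂ by omega, hm₂]
    push_cast
    ring

/-- For `t ∈ P`, `S(β^t) = -(n₁+1)/2`, and for `t ∈ Q`, `S(β^t) = (n₂-1)/2`, in a field
of characteristic `p` with `p ∤ n`. -/
theorem Sval_at_P_and_Q {K : Type*} [Field K] (p : ℕ) [CharP K p]
    (n₁ n₂ n e : ℕ)
    (hp₁ : n₁.Prime) (hp₂ : n₂.Prime) (ho₁ : Odd n₁) (ho₂ : Odd n₂) (hne : n₁ ≠ n₂)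
    (hn : n = n₁ * n₂) (hd : Nat.gcd (n₁ - 1) (n₂ - 1) = 6)
    (he : e = (n₁ - 1) * (n₂ - 1) / 6)
    (g u : ℕ)
    (hg₁ : orderOf (g : ZMod n₁) = n₁ - 1) (hg₂ : orderOf (g : ZMod n₂) = n₂ - 1)
    (hu₁ : u ≡ g [MOD n₁]) (hu₂ : u ≡ 1 [MOD n₂])
    (β : K) (hβ : IsPrimitiveRoot β n) (hpn : ¬ p ∣ n) :
    (∀ k : ℕ, 1 ≤ k → k ≤ n₂ - 1 →
      STUval n₁ n₂ n e (g : ZMod n) (u : ZMod n) 3 4 5 (β ^ (k * n₁)) =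
        -(((n₁ + 1) / 2 : ℕ) : K)) ∧
    (∀ k : ℕ, 1 ≤ k → k ≤ n₁ - 1 →
      STUval n₁ n₂ n e (g : ZMod n) (u : ZMod n) 3 4 5 (β ^ (k * n₂)) =
        (((n₂ - 1) / 2 : ℕ) : K)) :=
  Sval_at_P_and_Q_general n₁ n₂ n e hp₁ hp₂ hne hn hd he g u hg₁ hg₂ hu₁ hu₂ β hβ
end

section
/- If q ∉ W₀, then S(β) ∉ {0, -1}. More precisely, if q ∈ W₁ then S satisfies S(β)^{q³} + S(β) + 1 = 0, and neither 0 nor -1 is a root of z^{q³} + z + 1. -/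
open Finset

lemma Nat.modEq_and_modEq_iff_modEq_lcm {a b m n : ℕ} :
    a ≡ b [MOD m] ∧ a ≡ b [MOD n] ↔ a ≡ b [MOD m.lcm n] := by
  simp only [← Int.natCast_modEq_iff, Int.modEq_and_modEq_iff_modEq_lcm]
  simp [Int.lcm]

lemma pow_eq_pow_iff_modEq_of_orderOf_eq {M : Type*} [Monoid M] {x : M} {k a b : ℕ} (hk : k ≠ 0)
    (hx : orderOf x = k) : x ^ a = x ^ b ↔ a ≡ b [MOD k] := by
  subst hx
  exact (orderOf_pos_iff.1 (Nat.pos_of_ne_zero hk)).pow_eq_pow_iff_modEq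

section RootsOfUnity

variable {M : Type*} [Monoid M] {n : ℕ} {β : M}

lemma pow_mod_of_pow_eq_one (hβ : β ^ n = 1) (a : ℕ) : β ^ (a % n) = β ^ a := by
  conv_rhs => rw [← Nat.mod_add_div a n, pow_add, pow_mul, hβ, one_pow, mul_one]

lemma pow_val_natCast (hβ : β ^ n = 1) (a : ℕ) : β ^ (a : ZMod n).val = β ^ a := by
  rw [ZMod.val_natCast, pow_mod_of_pow_eq_one hβ]

lemma pow_val_mul_natCast [NeZero n] (hβ : β ^ n = 1) (x : ZMod n) (c : ℕ) :
    β ^ (x * c).val = (β ^ x.val) ^ c := by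
  have : x * c = ((x.val * c : ℕ) : ZMod n) := by rw [Nat.cast_mul, ZMod.natCast_zmod_val]
  rw [this, pow_val_natCast hβ, pow_mul]

lemma sum_pow_val_pow_eq_sum_image_mul [NeZero n] {R : Type*} [CommSemiring R] {β : R}
    (hβ : β ^ n = 1) {c : ℕ} (hc : IsUnit (c : ZMod n)) (A : Finset (ZMod n)) :
    ∑ x ∈ A, (β ^ x.val) ^ c = ∑ x ∈ A.image (· * (c : ZMod n)), β ^ x.val := by
  rw [sum_image fun x _ y _ h => hc.mul_right_cancel h]
  simp only [pow_val_mul_natCast hβ]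

end RootsOfUnity

namespace IsPrimitiveRoot

variable {K : Type*} [Field K]

lemma sum_Icc_pow_eq_neg_one {m : ℕ} {γ : K} (hγ : IsPrimitiveRoot γ m) (hm : 1 < m) :
    ∑ k ∈ Icc 1 (m - 1), γ ^ k = -1 := by
  have h := hγ.geom_sum_eq_zero hm
  rw [range_eq_Ico, sum_eq_sum_Ico_succ_bot (by omega), pow_zero] at h
  have hIcc : Icc 1 (m - 1) = Ico 1 m := by ext; simp only [mem_Icc, mem_Ico]; omega
  rw [hIcc]
  linear_combination h

lemma sum_filter_dvd_pow_eq_zero {n m : ℕ} {β : K} (hβ : IsPrimitiveRoot β n) (hmn : m ∣ n)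
    (hm : m < n) : ∑ k ∈ range n with m ∣ k, β ^ k = 0 := by
  obtain ⟨l, rfl⟩ := hmn
  have hm0 : 0 < m := Nat.pos_of_ne_zero (by rintro rfl; simp at hm)
  have hl : 1 < l := by
    by_contra! h
    interval_cases l <;> simp at hm
  have himage : {k ∈ range (m * l) | m ∣ k} = (range l).image (m * ·) := by
    ext k
    simp only [mem_filter, mem_range, mem_image]
    constructor
    · rintro ⟨hk, j, rfl⟩
      exact ⟨j, Nat.lt_of_mul_lt_mul_left hk, rfl⟩
    · rintro ⟨j, hj, rfl⟩
      exact ⟨Nat.mul_lt_mul_of_pos_left hj hm0, dvd_mul_right m j⟩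
  rw [himage, sum_image fun i _ j _ h => Nat.eq_of_mul_eq_mul_left hm0 h]
  simp only [pow_mul]
  exact (hβ.pow (by positivity) rfl).geom_sum_eq_zero hl

lemma sum_filter_coprime_pow_eq_one {p₁ p₂ : ℕ} {β : K}
    (hp₁ : p₁.Prime) (hp₂ : p₂.Prime) (hne : p₁ ≠ p₂) (hβ : IsPrimitiveRoot β (p₁ * p₂)) :
    ∑ k ∈ range (p₁ * p₂) with (p₁ * p₂).Coprime k, β ^ k = 1 := by
  set n := p₁ * p₂
  have hcop : ∀ k, n.Coprime k ↔ ¬(p₁ ∣ k ∨ p₂ ∣ k) := fun k => by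
    rw [Nat.coprime_mul_iff_left, hp₁.coprime_iff_not_dvd, hp₂.coprime_iff_not_dvd, not_or]
  have hboth : {k ∈ range n | p₁ ∣ k} ∩ {k ∈ range n | p₂ ∣ k} = {0} := by
    ext k
    simp only [mem_inter, mem_filter, mem_range, mem_singleton]
    constructor
    · rintro ⟨⟨hk, h₁⟩, -, h₂⟩
      exact Nat.eq_zero_of_dvd_of_lt
        (((Nat.coprime_primes hp₁ hp₂).2 hne).mul_dvd_of_dvd_of_dvd h₁ h₂) hk
    · rintro rfl
      have : 0 < n := Nat.mul_pos hp₁.pos hp₂.pos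
      exact ⟨⟨this, dvd_zero _⟩, this, dvd_zero _⟩
  -- inclusion-exclusion over divisibility by `p₁` and `p₂`
  have hunion := sum_union_inter (f := (β ^ ·)) (s₁ := {k ∈ range n | p₁ ∣ k})
    (s₂ := {k ∈ range n | p₂ ∣ k})
  rw [← filter_or, hboth, sum_singleton, pow_zero,
    hβ.sum_filter_dvd_pow_eq_zero (dvd_mul_right p₁ p₂) (lt_mul_right hp₁.pos hp₂.one_lt),
    hβ.sum_filter_dvd_pow_eq_zero (dvd_mul_left p₂ p₁) (lt_mul_left hp₂.pos hp₁.one_lt)] at hunion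
  have htotal := sum_filter_add_sum_filter_not (range n) (fun k => p₁ ∣ k ∨ p₂ ∣ k) (β ^ ·)
  rw [hβ.geom_sum_eq_zero (Nat.one_lt_mul_iff.2 ⟨hp₁.pos, hp₂.pos, Or.inl hp₁.one_lt⟩)] at htotal
  simp only [← hcop] at htotal
  linear_combination htotal - hunion

end IsPrimitiveRoot

namespace ZMod

lemma natCast_eq_natCast_iff_and {m n : ℕ} (h : m.Coprime n) (a b : ℕ) :
    (a : ZMod (m * n)) = b ↔ (a : ZMod m) = b ∧ (a : ZMod n) = b := by
  simp only [natCast_eq_natCast_iff]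
  exact (Nat.modEq_and_modEq_iff_modEq_mul h).symm

lemma isUnit_natCast_mul_iff {m n a : ℕ} :
    IsUnit (a : ZMod (m * n)) ↔ IsUnit (a : ZMod m) ∧ IsUnit (a : ZMod n) := by
  simp only [isUnit_iff_coprime, Nat.coprime_mul_iff_right]

lemma image_val_filter_isUnit (n : ℕ) [NeZero n] :
    ({x : ZMod n | IsUnit x} : Finset (ZMod n)).image val = {k ∈ range n | n.Coprime k} := by
  ext k
  simp only [mem_image, mem_filter, mem_univ, true_and, mem_range]
  constructor
  · rintro ⟨x, hx, rfl⟩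
    rw [← natCast_zmod_val x, isUnit_iff_coprime] at hx
    exact ⟨val_lt x, hx.symm⟩
  · rintro ⟨hk, hcop⟩
    exact ⟨k, (isUnit_iff_coprime k n).2 hcop.symm, val_cast_of_lt hk⟩

lemma sum_filter_isUnit_val {M : Type*} [AddCommMonoid M] (n : ℕ) [NeZero n] (f : ℕ → M) :
    ∑ x : ZMod n with IsUnit x, f x.val = ∑ k ∈ range n with n.Coprime k, f k := by
  rw [← image_val_filter_isUnit, sum_image fun x _ y _ h => val_injective n h]

lemma card_filter_isUnit (n : ℕ) [NeZero n] : #{x : ZMod n | IsUnit x} = n.totient := by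
  rw [Nat.totient_eq_card_coprime, ← image_val_filter_isUnit,
    card_image_of_injective _ (val_injective n)]

end ZMod

section WhitemanClass

variable {n e : ℕ} {g u : ZMod n}

lemma mem_whitemanClass (he : 0 < e) (hge : g ^ e = 1) {i : ℕ} {x : ZMod n} :
    x ∈ whitemanClass n e g u i ↔ ∃ s, g ^ s * u ^ i = x := by
  simp only [whitemanClass, mem_image, mem_range]
  refine ⟨fun ⟨s, _, hs⟩ => ⟨s, hs⟩, fun ⟨s, hs⟩ => ⟨s % e, Nat.mod_lt s he, ?_⟩⟩
  rwa [pow_mod_of_pow_eq_one hge]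

lemma whitemanClass_image_mul (he : 0 < e) (hge : g ^ e = 1) {i j : ℕ} {c : ZMod n}
    (hc : c ∈ whitemanClass n e g u j) :
    (whitemanClass n e g u i).image (· * c) = whitemanClass n e g u (i + j) := by
  obtain ⟨s₀, rfl⟩ := (mem_whitemanClass he hge).1 hc
  obtain ⟨e', rfl⟩ : ∃ e', e = e' + 1 := ⟨e - 1, by omega⟩
  ext x
  simp only [mem_image, mem_whitemanClass he hge]
  constructor
  · rintro ⟨_, ⟨s, rfl⟩, rfl⟩
    exact ⟨s + s₀, by ring⟩
  · rintro ⟨s, rfl⟩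
    -- `g ^ (e' * s₀)` is the inverse of `g ^ s₀`, as `g ^ (e' + 1) = 1`
    refine ⟨g ^ (s + e' * s₀) * u ^ i, ⟨_, rfl⟩, ?_⟩
    calc g ^ (s + e' * s₀) * u ^ i * (g ^ s₀ * u ^ j)
        = g ^ s * (g ^ (e' + 1)) ^ s₀ * u ^ (i + j) := by ring
      _ = g ^ s * u ^ (i + j) := by rw [hge, one_pow, mul_one]

lemma pow_mem_whitemanClass (he : 0 < e) (hge : g ^ e = 1) {j : ℕ} {x : ZMod n}
    (hx : x ∈ whitemanClass n e g u j) (k : ℕ) : x ^ k ∈ whitemanClass n e g u (j * k) := by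
  obtain ⟨s, rfl⟩ := (mem_whitemanClass he hge).1 hx
  exact (mem_whitemanClass he hge).2 ⟨s * k, by rw [mul_pow, pow_mul, pow_mul]⟩

lemma whitemanClass_add_of_pow_eq (he : 0 < e) (hge : g ^ e = 1) {d t : ℕ} (hu : u ^ d = g ^ t)
    (i : ℕ) : whitemanClass n e g u (i + d) = whitemanClass n e g u i := by
  have hd : u ^ d ∈ whitemanClass n e g u d := (mem_whitemanClass he hge).2 ⟨0, by simp⟩
  have h0 : u ^ d ∈ whitemanClass n e g u 0 := (mem_whitemanClass he hge).2 ⟨t, by simp [hu]⟩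
  rw [← whitemanClass_image_mul he hge hd, whitemanClass_image_mul he hge h0, add_zero]

lemma sum_whitemanClass_pow_expChar_pow {K : Type*} [Field K] (p : ℕ) [ExpChar K p] [NeZero n]
    {β : K} (hβ : β ^ n = 1) (he : 0 < e) (hge : g ^ e = 1) {i j k : ℕ}
    (hq : ((p ^ k : ℕ) : ZMod n) ∈ whitemanClass n e g u j) (hunit : IsUnit ((p ^ k : ℕ) : ZMod n))
    (l : ℕ) :
    (∑ x ∈ whitemanClass n e g u i, β ^ x.val) ^ (p ^ k) ^ l =
      ∑ x ∈ whitemanClass n e g u (i + j * l), β ^ x.val := by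
  have hcast : ((p ^ (k * l) : ℕ) : ZMod n) = ((p ^ k : ℕ) : ZMod n) ^ l := by
    rw [pow_mul, Nat.cast_pow]
  rw [← pow_mul, sum_pow_char_pow, sum_pow_val_pow_eq_sum_image_mul hβ (hcast ▸ hunit.pow l),
    whitemanClass_image_mul he hge (hcast ▸ pow_mem_whitemanClass he hge hq l)]

end WhitemanClass

section Whiteman

variable {n₁ n₂ g u : ℕ}

lemma natCast_pow_lcm_eq_one (hcop : n₁.Coprime n₂) (hg₁ : orderOf (g : ZMod n₁) = n₁ - 1)
    (hg₂ : orderOf (g : ZMod n₂) = n₂ - 1) :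
    (g : ZMod (n₁ * n₂)) ^ (n₁ - 1).lcm (n₂ - 1) = 1 := by
  rw [← Nat.cast_pow, ← Nat.cast_one (R := ZMod (n₁ * n₂)), ZMod.natCast_eq_natCast_iff_and hcop]
  push_cast
  rw [← orderOf_dvd_iff_pow_eq_one, ← orderOf_dvd_iff_pow_eq_one, hg₁, hg₂]
  exact ⟨Nat.dvd_lcm_left _ _, Nat.dvd_lcm_right _ _⟩

lemma exists_natCast_pow_gcd_eq (hp₁ : n₁.Prime) (hp₂ : n₂.Prime) (hcop : n₁.Coprime n₂)
    (hg₁ : orderOf (g : ZMod n₁) = n₁ - 1) (hg₂ : orderOf (g : ZMod n₂) = n₂ - 1)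
    (hu₁ : u ≡ g [MOD n₁]) (hu₂ : u ≡ 1 [MOD n₂]) :
    ∃ t, (u : ZMod (n₁ * n₂)) ^ (n₁ - 1).gcd (n₂ - 1) = (g : ZMod (n₁ * n₂)) ^ t := by
  obtain ⟨t, ht₁, ht₂⟩ := Nat.chineseRemainder' (n := n₁ - 1) (m := n₂ - 1)
    (a := (n₁ - 1).gcd (n₂ - 1)) (b := 0) (Nat.modEq_zero_iff_dvd.2 dvd_rfl)
  refine ⟨t, ?_⟩
  rw [← Nat.cast_pow, ← Nat.cast_pow, ZMod.natCast_eq_natCast_iff_and hcop]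
  push_cast
  rw [(ZMod.natCast_eq_natCast_iff _ _ _).2 hu₁, (ZMod.natCast_eq_natCast_iff _ _ _).2 hu₂,
    Nat.cast_one, one_pow, ← pow_zero (g : ZMod n₂),
    pow_eq_pow_iff_modEq_of_orderOf_eq (Nat.sub_ne_zero_of_lt hp₁.one_lt) hg₁,
    pow_eq_pow_iff_modEq_of_orderOf_eq (Nat.sub_ne_zero_of_lt hp₂.one_lt) hg₂]
  exact ⟨ht₁.symm, ht₂.symm⟩

lemma injOn_natCast_pow_mul_pow_s14 (hp₁ : n₁.Prime) (hp₂ : n₂.Prime) (hcop : n₁.Coprime n₂)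
    (hg₁ : orderOf (g : ZMod n₁) = n₁ - 1) (hg₂ : orderOf (g : ZMod n₂) = n₂ - 1)
    (hu₁ : u ≡ g [MOD n₁]) (hu₂ : u ≡ 1 [MOD n₂]) :
    Set.InjOn (fun si : ℕ × ℕ => (g : ZMod (n₁ * n₂)) ^ si.1 * (u : ZMod (n₁ * n₂)) ^ si.2)
      ↑(range ((n₁ - 1).lcm (n₂ - 1)) ×ˢ range ((n₁ - 1).gcd (n₂ - 1))) := by
  rintro ⟨s, i⟩ hsi ⟨s', i'⟩ hsi' h
  simp only [coe_product, Set.mem_prod, mem_coe, mem_range] at hsi hsi'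
  have h' : ((g ^ s * u ^ i : ℕ) : ZMod (n₁ * n₂)) = ((g ^ s' * u ^ i' : ℕ) : ZMod _) := by
    push_cast
    exact h
  rw [ZMod.natCast_eq_natCast_iff_and hcop] at h'
  obtain ⟨h₁, h₂⟩ := h'
  push_cast at h₁ h₂
  rw [(ZMod.natCast_eq_natCast_iff _ _ _).2 hu₁, ← pow_add, ← pow_add,
    pow_eq_pow_iff_modEq_of_orderOf_eq (Nat.sub_ne_zero_of_lt hp₁.one_lt) hg₁] at h₁
  rw [(ZMod.natCast_eq_natCast_iff _ _ _).2 hu₂, Nat.cast_one, one_pow, one_pow, mul_one, mul_one,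
    pow_eq_pow_iff_modEq_of_orderOf_eq (Nat.sub_ne_zero_of_lt hp₂.one_lt) hg₂] at h₂
  -- reducing both congruences modulo the gcd separates the exponent of `u`
  have hi : i = i' := by
    have h₁' := h₁.of_dvd (Nat.gcd_dvd_left _ (n₂ - 1))
    have h₂' := h₂.of_dvd (Nat.gcd_dvd_right (n₁ - 1) _)
    exact (Nat.ModEq.add_left_cancel h₂' h₁').eq_of_lt_of_lt hsi.2 hsi'.2
  subst hi
  have hs := Nat.modEq_and_modEq_iff_modEq_lcm.1 ⟨Nat.ModEq.add_right_cancel' i h₁, h₂⟩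
  rw [hs.eq_of_lt_of_lt hsi.1 hsi'.1]

lemma isUnit_natCast_pow_mul_pow (hp₁ : n₁.Prime) (hp₂ : n₂.Prime)
    (hg₁ : orderOf (g : ZMod n₁) = n₁ - 1) (hg₂ : orderOf (g : ZMod n₂) = n₂ - 1)
    (hu₁ : u ≡ g [MOD n₁]) (hu₂ : u ≡ 1 [MOD n₂]) (s i : ℕ) :
    IsUnit ((g : ZMod (n₁ * n₂)) ^ s * (u : ZMod (n₁ * n₂)) ^ i) := by
  have hg₁' : IsUnit (g : ZMod n₁) :=
    (orderOf_pos_iff.1 (hg₁ ▸ Nat.sub_pos_of_lt hp₁.one_lt)).isUnit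
  have hg₂' : IsUnit (g : ZMod n₂) :=
    (orderOf_pos_iff.1 (hg₂ ▸ Nat.sub_pos_of_lt hp₂.one_lt)).isUnit
  rw [← Nat.cast_pow, ← Nat.cast_pow, ← Nat.cast_mul, ZMod.isUnit_natCast_mul_iff]
  push_cast
  rw [(ZMod.natCast_eq_natCast_iff _ _ _).2 hu₁, (ZMod.natCast_eq_natCast_iff _ _ _).2 hu₂,
    Nat.cast_one, one_pow, mul_one, ← pow_add]
  exact ⟨hg₁'.pow _, hg₂'.pow _⟩

lemma isUnit_of_mem_whitemanClass (hp₁ : n₁.Prime) (hp₂ : n₂.Prime)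
    (hg₁ : orderOf (g : ZMod n₁) = n₁ - 1) (hg₂ : orderOf (g : ZMod n₂) = n₂ - 1)
    (hu₁ : u ≡ g [MOD n₁]) (hu₂ : u ≡ 1 [MOD n₂]) {e i : ℕ} {x : ZMod (n₁ * n₂)}
    (hx : x ∈ whitemanClass (n₁ * n₂) e g u i) : IsUnit x := by
  obtain ⟨s, -, rfl⟩ := mem_image.1 hx
  exact isUnit_natCast_pow_mul_pow hp₁ hp₂ hg₁ hg₂ hu₁ hu₂ s i

lemma image_natCast_pow_mul_pow_eq_filter_isUnit [NeZero (n₁ * n₂)] (hp₁ : n₁.Prime)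
    (hp₂ : n₂.Prime) (hne : n₁ ≠ n₂) (hg₁ : orderOf (g : ZMod n₁) = n₁ - 1)
    (hg₂ : orderOf (g : ZMod n₂) = n₂ - 1)
    (hu₁ : u ≡ g [MOD n₁]) (hu₂ : u ≡ 1 [MOD n₂]) :
    (range ((n₁ - 1).lcm (n₂ - 1)) ×ˢ range ((n₁ - 1).gcd (n₂ - 1))).image
        (fun si : ℕ × ℕ => (g : ZMod (n₁ * n₂)) ^ si.1 * (u : ZMod (n₁ * n₂)) ^ si.2) =
      ({x : ZMod (n₁ * n₂) | IsUnit x} : Finset _) := by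
  have hcop : n₁.Coprime n₂ := (Nat.coprime_primes hp₁ hp₂).2 hne
  refine eq_of_subset_of_card_le (fun x hx => ?_) ?_
  · obtain ⟨⟨s, i⟩, -, rfl⟩ := mem_image.1 hx
    exact mem_filter.2 ⟨mem_univ _, isUnit_natCast_pow_mul_pow hp₁ hp₂ hg₁ hg₂ hu₁ hu₂ s i⟩
  · rw [card_image_of_injOn (injOn_natCast_pow_mul_pow_s14 hp₁ hp₂ hcop hg₁ hg₂ hu₁ hu₂),
      card_product, card_range, card_range, ZMod.card_filter_isUnit, mul_comm ((n₁ - 1).lcm _),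
      Nat.gcd_mul_lcm, Nat.totient_mul hcop, Nat.totient_prime hp₁, Nat.totient_prime hp₂]

lemma sum_range_gcd_sum_whitemanClass {M : Type*} [AddCommMonoid M] [NeZero (n₁ * n₂)]
    (hp₁ : n₁.Prime) (hp₂ : n₂.Prime) (hne : n₁ ≠ n₂) (hg₁ : orderOf (g : ZMod n₁) = n₁ - 1)
    (hg₂ : orderOf (g : ZMod n₂) = n₂ - 1) (hu₁ : u ≡ g [MOD n₁]) (hu₂ : u ≡ 1 [MOD n₂])
    (f : ZMod (n₁ * n₂) → M) :
    ∑ i ∈ range ((n₁ - 1).gcd (n₂ - 1)),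
        ∑ x ∈ whitemanClass (n₁ * n₂) ((n₁ - 1).lcm (n₂ - 1)) g u i, f x =
      ∑ x : ZMod (n₁ * n₂) with IsUnit x, f x := by
  have hinj :=
    injOn_natCast_pow_mul_pow_s14 hp₁ hp₂ ((Nat.coprime_primes hp₁ hp₂).2 hne) hg₁ hg₂ hu₁ hu₂
  rw [← image_natCast_pow_mul_pow_eq_filter_isUnit hp₁ hp₂ hne hg₁ hg₂ hu₁ hu₂, sum_image hinj,
    sum_product_right]
  refine sum_congr rfl fun i hi => ?_
  rw [whitemanClass, sum_image fun s hs s' hs' h =>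
    (Prod.ext_iff.1 (hinj (mk_mem_product hs hi) (mk_mem_product hs' hi) h)).1]

end Whiteman

section STU

variable {K : Type*} [Field K] {n₁ n₂ e : ℕ} {g u : ZMod (n₁ * n₂)} {β : K}

lemma STUval_eq_neg_one_add (hβ : IsPrimitiveRoot β (n₁ * n₂)) (hn₁ : 0 < n₁) (hn₂ : 1 < n₂)
    (a b c : ℕ) :
    STUval n₁ n₂ (n₁ * n₂) e g u a b c β =
      -1 + ((∑ x ∈ whitemanClass (n₁ * n₂) e g u a, β ^ x.val) +
        (∑ x ∈ whitemanClass (n₁ * n₂) e g u b, β ^ x.val) +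
        (∑ x ∈ whitemanClass (n₁ * n₂) e g u c, β ^ x.val)) := by
  have hP : ∑ k ∈ Icc 1 (n₂ - 1), β ^ (k * n₁) = -1 := by
    simp only [mul_comm _ n₁, pow_mul]
    exact (hβ.pow (by positivity) rfl).sum_Icc_pow_eq_neg_one hn₂
  rw [STUval, hP]
  ring

lemma STUval_pow_expChar_pow (p : ℕ) [ExpChar K p] (hβ : IsPrimitiveRoot β (n₁ * n₂))
    (hn₁ : 0 < n₁) (hn₂ : 1 < n₂) (he : 0 < e) (hge : g ^ e = 1) {j k : ℕ}
    (hq : ((p ^ k : ℕ) : ZMod (n₁ * n₂)) ∈ whitemanClass (n₁ * n₂) e g u j)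
    (hunit : IsUnit ((p ^ k : ℕ) : ZMod (n₁ * n₂))) (l a b c : ℕ) :
    STUval n₁ n₂ (n₁ * n₂) e g u a b c β ^ (p ^ k) ^ l =
      -1 + ((∑ x ∈ whitemanClass (n₁ * n₂) e g u (a + j * l), β ^ x.val) +
        (∑ x ∈ whitemanClass (n₁ * n₂) e g u (b + j * l), β ^ x.val) +
        (∑ x ∈ whitemanClass (n₁ * n₂) e g u (c + j * l), β ^ x.val)) := by
  have : NeZero (n₁ * n₂) := ⟨(Nat.mul_pos hn₁ (by omega)).ne'⟩
  rw [STUval_eq_neg_one_add hβ hn₁ hn₂, ← pow_mul, add_pow_expChar_pow, add_pow_expChar_pow,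
    add_pow_expChar_pow, neg_one_pow_expChar_pow, pow_mul]
  simp only [sum_whitemanClass_pow_expChar_pow p hβ.pow_eq_one he hge hq hunit]

end STU

lemma sum_range_gcd_whitemanClass_pow_val {K : Type*} [Field K] {n₁ n₂ g u : ℕ} {β : K}
    (hp₁ : n₁.Prime) (hp₂ : n₂.Prime) (hne : n₁ ≠ n₂) (hg₁ : orderOf (g : ZMod n₁) = n₁ - 1)
    (hg₂ : orderOf (g : ZMod n₂) = n₂ - 1) (hu₁ : u ≡ g [MOD n₁]) (hu₂ : u ≡ 1 [MOD n₂])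
    (hβ : IsPrimitiveRoot β (n₁ * n₂)) :
    ∑ i ∈ range ((n₁ - 1).gcd (n₂ - 1)),
        ∑ x ∈ whitemanClass (n₁ * n₂) ((n₁ - 1).lcm (n₂ - 1)) g u i, β ^ x.val = 1 := by
  have : NeZero (n₁ * n₂) := ⟨(Nat.mul_pos hp₁.pos hp₂.pos).ne'⟩
  rw [sum_range_gcd_sum_whitemanClass hp₁ hp₂ hne hg₁ hg₂ hu₁ hu₂,
    ZMod.sum_filter_isUnit_val, hβ.sum_filter_coprime_pow_eq_one hp₁ hp₂ hne]

lemma STUval_pow_add_add_one_eq_zero {K : Type*} [Field K] (p : ℕ) [ExpChar K p]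
    {n₁ n₂ g u m : ℕ} {β : K} (hp₁ : n₁.Prime) (hp₂ : n₂.Prime) (hne : n₁ ≠ n₂)
    (hd : (n₁ - 1).gcd (n₂ - 1) = 6) (hg₁ : orderOf (g : ZMod n₁) = n₁ - 1)
    (hg₂ : orderOf (g : ZMod n₂) = n₂ - 1) (hu₁ : u ≡ g [MOD n₁]) (hu₂ : u ≡ 1 [MOD n₂])
    (hβ : IsPrimitiveRoot β (n₁ * n₂))
    (hq : ((p ^ m : ℕ) : ZMod (n₁ * n₂)) ∈ whitemanClass (n₁ * n₂) ((n₁ - 1).lcm (n₂ - 1)) g u 1) :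
    STUval n₁ n₂ (n₁ * n₂) ((n₁ - 1).lcm (n₂ - 1)) g u 3 4 5 β ^ (p ^ m) ^ 3 +
      STUval n₁ n₂ (n₁ * n₂) ((n₁ - 1).lcm (n₂ - 1)) g u 3 4 5 β + 1 = 0 := by
  have hcop : n₁.Coprime n₂ := (Nat.coprime_primes hp₁ hp₂).2 hne
  have hlcm : 0 < (n₁ - 1).lcm (n₂ - 1) :=
    Nat.lcm_pos (Nat.sub_pos_of_lt hp₁.one_lt) (Nat.sub_pos_of_lt hp₂.one_lt)
  have hge := natCast_pow_lcm_eq_one hcop hg₁ hg₂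
  obtain ⟨t, ht⟩ := exists_natCast_pow_gcd_eq hp₁ hp₂ hcop hg₁ hg₂ hu₁ hu₂
  have hsum := sum_range_gcd_whitemanClass_pow_val hp₁ hp₂ hne hg₁ hg₂ hu₁ hu₂ hβ
  rw [hd] at ht hsum
  simp only [sum_range_succ, sum_range_zero, zero_add] at hsum
  rw [STUval_pow_expChar_pow p hβ hp₁.pos hp₂.one_lt hlcm hge hq
      (isUnit_of_mem_whitemanClass hp₁ hp₂ hg₁ hg₂ hu₁ hu₂ hq),
    STUval_eq_neg_one_add hβ hp₁.pos hp₂.one_lt, show 3 + 1 * 3 = 0 + 6 from rfl,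
    show 4 + 1 * 3 = 1 + 6 from rfl, show 5 + 1 * 3 = 2 + 6 from rfl,
    whitemanClass_add_of_pow_eq hlcm hge ht, whitemanClass_add_of_pow_eq hlcm hge ht,
    whitemanClass_add_of_pow_eq hlcm hge ht]
  linear_combination hsum

theorem Sval_ne_zero_neg_one_general {K : Type*} [Field K] (p : ℕ) [CharP K p]
    (q n₁ n₂ n e : ℕ) (hq : ∃ m : ℕ, 0 < m ∧ q = p ^ m)
    (hp₁ : n₁.Prime) (hp₂ : n₂.Prime) (hne : n₁ ≠ n₂)
    (hn : n = n₁ * n₂) (hd : Nat.gcd (n₁ - 1) (n₂ - 1) = 6)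
    (he : e = (n₁ - 1) * (n₂ - 1) / 6)
    (g u : ℕ)
    (hg₁ : orderOf (g : ZMod n₁) = n₁ - 1) (hg₂ : orderOf (g : ZMod n₂) = n₂ - 1)
    (hu₁ : u ≡ g [MOD n₁]) (hu₂ : u ≡ 1 [MOD n₂])
    (β : K) (hβ : IsPrimitiveRoot β n)
    (hqW : (q : ZMod n) ∈ whitemanClass n e (g : ZMod n) (u : ZMod n) 1) :
    (STUval n₁ n₂ n e (g : ZMod n) (u : ZMod n) 3 4 5 β) ^ (q ^ 3) +
        STUval n₁ n₂ n e (g : ZMod n) (u : ZMod n) 3 4 5 β + 1 = 0 ∧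
      (0 : K) ^ (q ^ 3) + 0 + 1 ≠ 0 ∧
      (-1 : K) ^ (q ^ 3) + (-1) + 1 ≠ 0 ∧
      STUval n₁ n₂ n e (g : ZMod n) (u : ZMod n) 3 4 5 β ≠ 0 ∧
      STUval n₁ n₂ n e (g : ZMod n) (u : ZMod n) 3 4 5 β ≠ -1 := by
  subst hn
  obtain rfl : e = (n₁ - 1).lcm (n₂ - 1) := by rw [he, ← hd]; rfl
  obtain ⟨m, hm, rfl⟩ := hq
  have hp : p.Prime := (CharP.char_is_prime_or_zero K p).resolve_right fun hp0 => by
    have : Fact (1 < n₁ * n₂) := ⟨Nat.one_lt_mul_iff.2 ⟨hp₁.pos, hp₂.pos, Or.inl hp₁.one_lt⟩⟩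
    have hunit := isUnit_of_mem_whitemanClass hp₁ hp₂ hg₁ hg₂ hu₁ hu₂ hqW
    simp [hp0, zero_pow hm.ne'] at hunit
  have : ExpChar K p := ExpChar.prime hp
  have hroot := STUval_pow_add_add_one_eq_zero p hp₁ hp₂ hne hd hg₁ hg₂ hu₁ hu₂ hβ hqW
  have h0 : (0 : K) ^ (p ^ m) ^ 3 + 0 + 1 ≠ 0 := by simp [hp.ne_zero]
  have h1 : (-1 : K) ^ (p ^ m) ^ 3 + (-1) + 1 ≠ 0 := by simp
  exact ⟨hroot, h0, h1, fun h => h0 (h ▸ hroot), fun h => h1 (h ▸ hroot)⟩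

/-- If `q ∈ W₁` (so `q ∉ W₀`), then `S(β)` satisfies `S(β)^{q³} + S(β) + 1 = 0`, neither
`0` nor `-1` is a root of `z^{q³} + z + 1`, and hence `S(β) ∉ {0, -1}`. -/
theorem Sval_ne_zero_neg_one {K : Type*} [Field K] (p : ℕ) [CharP K p]
    (q n₁ n₂ n e : ℕ) (hq : ∃ m : ℕ, 0 < m ∧ q = p ^ m)
    (hp₁ : n₁.Prime) (hp₂ : n₂.Prime) (ho₁ : Odd n₁) (ho₂ : Odd n₂) (hne : n₁ ≠ n₂)
    (hn : n = n₁ * n₂) (hd : Nat.gcd (n₁ - 1) (n₂ - 1) = 6)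
    (he : e = (n₁ - 1) * (n₂ - 1) / 6)
    (g u : ℕ)
    (hg₁ : orderOf (g : ZMod n₁) = n₁ - 1) (hg₂ : orderOf (g : ZMod n₂) = n₂ - 1)
    (hu₁ : u ≡ g [MOD n₁]) (hu₂ : u ≡ 1 [MOD n₂])
    (β : K) (hβ : IsPrimitiveRoot β n) (hcop : Nat.Coprime n q)
    (hqW : (q : ZMod n) ∈ whitemanClass n e (g : ZMod n) (u : ZMod n) 1) :
    (STUval n₁ n₂ n e (g : ZMod n) (u : ZMod n) 3 4 5 β) ^ (q ^ 3) +
        STUval n₁ n₂ n e (g : ZMod n) (u : ZMod n) 3 4 5 β + 1 = 0 ∧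
      (0 : K) ^ (q ^ 3) + 0 + 1 ≠ 0 ∧
      (-1 : K) ^ (q ^ 3) + (-1) + 1 ≠ 0 ∧
      STUval n₁ n₂ n e (g : ZMod n) (u : ZMod n) 3 4 5 β ≠ 0 ∧
      STUval n₁ n₂ n e (g : ZMod n) (u : ZMod n) 3 4 5 β ≠ -1 :=
  Sval_ne_zero_neg_one_general p q n₁ n₂ n e hq hp₁ hp₂ hne hn hd he g u hg₁ hg₂ hu₁ hu₂ β hβ hqW
end

section
/- The cyclic code of length n = n₁n₂ over GF(q) with generator polynomial g(x) = (x^n-1)(x-1)/((x^{n₁}-1)(x^{n₂}-1)) has dimension n₁ + n₂ - 1 and minimum distance min(n₁, n₂). -/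
/-!
The cofactors `(X^{n₁} - 1)/(X - 1)` and `(X^{n₂} - 1)/(X - 1)` of `g` are coprime, and multiplying
`g` by them gives `π₂ = (X^n - 1)/(X^{n₂} - 1)` and `π₁ = (X^n - 1)/(X^{n₁} - 1)`. Hence every codeword
is `π₁ w₁ + π₂ w₂` with `deg w₁ < n₁`, `deg w₂ < n₂`, and its `i`-th coefficient is
`w₁(i mod n₁) + w₂(i mod n₂)`. By the Chinese remainder theorem its weight is the number of nonzero
entries of the array `(a, b) ↦ w₁(a) + w₂(b)` over `ℤ/n₁ × ℤ/n₂`, which is at least `min(n₁, n₂)` unless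
the array vanishes. The codewords `π₁` and `π₂` have weights `n₂` and `n₁`, and the dimension is
`n - deg g = n₁ + n₂ - 1`.
-/

open Polynomial Finset

theorem min_card_le_card_filter_add_ne_zero {ι κ G : Type*} [Fintype ι] [Fintype κ]
    [AddRightCancelMonoid G] [DecidableEq G] (v : ι → G) (u : κ → G)
    (h : ∃ a b, v a + u b ≠ 0) :
    min (Fintype.card ι) (Fintype.card κ) ≤ #{ab : ι × κ | v ab.1 + u ab.2 ≠ 0} := by
  obtain ⟨a₀, b₀, h₀⟩ := h
  -- Either `v` is constant and all entries `(a, b₀)` are nonzero, or `v a₁ ≠ v a₀` and every `b`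
  -- has a nonzero entry `(a₀, b)` or `(a₁, b)`.
  by_cases hv : ∀ a, v a = v a₀
  · refine (min_le_left _ _).trans <| card_le_card_of_injOn (fun a => (a, b₀)) (fun a _ => ?_)
      fun a _ a' _ h => congrArg Prod.fst h
    simpa [hv a] using h₀
  · obtain ⟨a₁, ha₁⟩ := not_forall.mp hv
    refine (min_le_right _ _).trans <|
      card_le_card_of_injOn (fun b => if v a₁ + u b = 0 then (a₀, b) else (a₁, b))
        (fun b _ => ?_) fun b _ b' _ h => by simpa [apply_ite Prod.snd] using congrArg Prod.snd h
    by_cases hb : v a₁ + u b = 0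
    · simpa [hb] using fun h => ha₁ (add_right_cancel (hb.trans h.symm))
    · simp [hb]

theorem ZMod.exists_lt_mul_natCast_eq {m k : ℕ} [NeZero m] [NeZero k] (hmk : m.Coprime k)
    (a : ZMod m) (b : ZMod k) : ∃ i < m * k, (i : ZMod m) = a ∧ (i : ZMod k) = b :=
  let i := Nat.chineseRemainder hmk a.val b.val
  ⟨i, Nat.chineseRemainder_lt_mul hmk _ _ (NeZero.ne m) (NeZero.ne k),
    ((ZMod.natCast_eq_natCast_iff _ _ _).mpr i.2.1).trans (ZMod.natCast_zmod_val a),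
    ((ZMod.natCast_eq_natCast_iff _ _ _).mpr i.2.2).trans (ZMod.natCast_zmod_val b)⟩

namespace Polynomial

section Semiring
variable {R : Type*} [Semiring R]

theorem coeff_sum_X_pow_mul_mul {m k : ℕ} {p : R[X]} (hp : p.degree < m) (i : ℕ) :
    ((∑ j ∈ range k, X ^ (m * j)) * p).coeff i = if i < m * k then p.coeff (i % m) else 0 := by
  have hvanish : ∀ t, m ≤ t → p.coeff t = 0 := (degree_lt_iff_coeff_zero p m).mp hp
  rcases Nat.eq_zero_or_pos m with rfl | hm
  · simp [show p = 0 from ext fun t => hvanish t t.zero_le]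
  have hterm : ∀ j ≠ i / m, (X ^ (m * j) * p).coeff i = 0 := by
    intro j hj
    rw [coeff_X_pow_mul']
    split_ifs with hji
    · have hlt : j < i / m := ((Nat.le_div_iff_mul_le hm).mpr (mul_comm m j ▸ hji)).lt_of_ne hj
      have := (Nat.le_div_iff_mul_le hm).mp hlt
      exact hvanish _ (by rw [Nat.succ_mul, mul_comm] at this; omega)
    · rfl
  rw [sum_mul, finsetSum_coeff]
  split_ifs with hi
  · rw [sum_eq_single_of_mem (i / m) (mem_range.mpr (Nat.div_lt_of_lt_mul hi))
      fun j _ hj => hterm j hj, coeff_X_pow_mul', if_pos (Nat.mul_div_le i m),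
      Nat.mod_eq_sub_mul_div]
  · refine sum_eq_zero fun j hj => hterm j ?_
    rintro rfl
    exact hi (by simpa [Nat.div_lt_iff_lt_mul hm, mul_comm] using mem_range.mp hj)

theorem degree_sum_X_pow_mul_mul_lt {m k : ℕ} {p : R[X]} (hp : p.degree < m) :
    ((∑ j ∈ range k, X ^ (m * j)) * p).degree < ↑(m * k) :=
  (degree_lt_iff_coeff_zero _ _).mpr fun i hi => by
    rw [coeff_sum_X_pow_mul_mul hp, if_neg (not_lt.mpr hi)]

theorem card_support_sum_X_pow_mul [Nontrivial R] {m : ℕ} (hm : 0 < m) (k : ℕ) :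
    #(∑ j ∈ range k, (X : R[X]) ^ (m * j)).support = k := by
  simpa [sum_range] using card_support_eq' (fun j : Fin k => m * j) (fun _ => (1 : R))
    (fun a b h => Fin.ext (Nat.eq_of_mul_eq_mul_left hm h)) fun _ => one_ne_zero

end Semiring

section Ring
variable {R : Type*} [Ring R]

theorem min_le_card_support_of_coeff_eq_add {m k : ℕ} (hmk : m.Coprime k) {c v w : R[X]}
    (hc : c ≠ 0) (hdeg : c.degree < ↑(m * k))
    (hcoeff : ∀ i < m * k, c.coeff i = v.coeff (i % m) + w.coeff (i % k)) :
    min m k ≤ #c.support := by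
  classical
  obtain ⟨i₀, hi₀⟩ := support_nonempty.mpr hc
  have hi₀lt : i₀ < m * k := by
    by_contra h
    exact mem_support_iff.mp hi₀ ((degree_lt_iff_coeff_zero _ _).mp hdeg i₀ (not_lt.mp h))
  have : NeZero m := ⟨by rintro rfl; simp at hi₀lt⟩
  have : NeZero k := ⟨by rintro rfl; simp at hi₀lt⟩
  let v' : ZMod m → R := fun a => v.coeff a.val
  let w' : ZMod k → R := fun b => w.coeff b.val
  have hcoeff' : ∀ i < m * k, c.coeff i = v' i + w' i := fun i hi => by
    simp only [v', w', ZMod.val_natCast, hcoeff i hi]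
  calc min m k = min (Fintype.card (ZMod m)) (Fintype.card (ZMod k)) := by simp only [ZMod.card]
    _ ≤ #{ab : ZMod m × ZMod k | v' ab.1 + w' ab.2 ≠ 0} :=
      min_card_le_card_filter_add_ne_zero v' w'
        ⟨i₀, i₀, hcoeff' i₀ hi₀lt ▸ mem_support_iff.mp hi₀⟩
    _ ≤ #c.support := card_le_card_of_surjOn (fun i => ((i : ZMod m), (i : ZMod k))) ?_
  rintro ⟨a, b⟩ hab
  obtain ⟨i, hi, rfl, rfl⟩ := ZMod.exists_lt_mul_natCast_eq hmk a b
  exact ⟨i, mem_support_iff.mpr (by rw [hcoeff' i hi]; simpa using hab), rfl⟩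

end Ring

section CommRing
variable {R : Type*} [CommRing R]

theorem sum_X_pow_mul_mul_X_pow_sub_one (m k : ℕ) :
    (∑ j ∈ range k, (X : R[X]) ^ (m * j)) * (X ^ m - 1) = X ^ (m * k) - 1 := by
  simpa only [← pow_mul] using geom_sum_mul ((X : R[X]) ^ m) k

theorem dvd_X_sub_one_of_dvd_X_pow_sub_one {m k : ℕ} (hmk : m.Coprime k) {d : R[X]}
    (hm : d ∣ X ^ m - 1) (hk : d ∣ X ^ k - 1) : d ∣ X - 1 := by
  have hpow : ∀ {t : ℕ}, d ∣ X ^ t - 1 → Ideal.Quotient.mk (Ideal.span {d}) X ^ t = 1 := by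
    intro t ht
    rwa [← map_pow, ← map_one (Ideal.Quotient.mk _), Ideal.Quotient.eq, Ideal.mem_span_singleton]
  have hX : Ideal.Quotient.mk (Ideal.span {d}) X = 1 := by
    simpa [hmk] using pow_gcd_eq_one.mpr ⟨hpow hm, hpow hk⟩
  rwa [← Ideal.mem_span_singleton, ← Ideal.Quotient.eq, map_one]

end CommRing

section Field
variable {F : Type*} [Field F] {m k : ℕ} {g : F[X]}

theorem isCoprime_geom_sum (hmk : m.Coprime k) :
    IsCoprime (∑ i ∈ range m, (X : F[X]) ^ i) (∑ i ∈ range k, X ^ i) := by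
  have hcast : ¬((m : F) = 0 ∧ (k : F) = 0) := by
    rintro ⟨hm, hk⟩
    have := (Nat.isCoprime_iff_coprime.mpr hmk).map (Int.castRingHom F)
    simp [hm, hk] at this
  have hroot : ∀ {t : ℕ}, X - 1 ∣ ∑ i ∈ range t, (X : F[X]) ^ i → (t : F) = 0 := by
    intro t ht
    have h1 : (∑ i ∈ range t, (X : F[X]) ^ i).IsRoot 1 := dvd_iff_isRoot.mp (by rwa [C_1])
    simpa [eval_finsetSum] using h1
  -- A common prime factor divides `gcd (X^m - 1) (X^k - 1) = X - 1`, so it is `X - 1` up to a unit.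
  refine isCoprime_of_prime_dvd ?_ fun z hz hzm hzk => ?_
  · rintro ⟨hm, hk⟩
    exact hcast ⟨hroot (hm ▸ dvd_zero _), hroot (hk ▸ dvd_zero _)⟩
  · have hzX : z ∣ X - 1 := dvd_X_sub_one_of_dvd_X_pow_sub_one hmk
      (hzm.trans (Dvd.intro _ (geom_sum_mul X m))) (hzk.trans (Dvd.intro _ (geom_sum_mul X k)))
    have hXz : X - 1 ∣ z :=
      hz.irreducible.dvd_symm (by simpa using irreducible_X_sub_C (1 : F)) hzX
    exact hcast ⟨hroot (hXz.trans hzm), hroot (hXz.trans hzk)⟩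

theorem mul_geom_sum_eq_sum_X_pow_mul (hk : 0 < k)
    (hg : g * ((X ^ m - 1) * (X ^ k - 1)) = (X ^ (m * k) - 1) * (X - 1)) :
    g * ∑ i ∈ range m, X ^ i = ∑ j ∈ range m, X ^ (k * j) := by
  have hne : (X ^ k - 1 : F[X]) * (X - 1) ≠ 0 := mul_ne_zero
    (by simpa using X_pow_sub_C_ne_zero hk (1 : F)) (by simpa using X_sub_C_ne_zero (1 : F))
  have hP := sum_X_pow_mul_mul_X_pow_sub_one (R := F) k m
  rw [mul_comm k m] at hP
  refine mul_right_cancel₀ hne ?_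
  linear_combination (X ^ k - 1) * g * geom_sum_mul (X : F[X]) m + hg - (X - 1) * hP

theorem exists_eq_sum_X_pow_mul_mul_add (hm : 0 < m) (hk : 0 < k) (hmk : m.Coprime k)
    (hg : g * ((X ^ m - 1) * (X ^ k - 1)) = (X ^ (m * k) - 1) * (X - 1)) {c : F[X]} (hc : g ∣ c)
    (hdeg : c.degree < ↑(m * k)) :
    ∃ w₁ w₂ : F[X], w₁.degree < m ∧ w₂.degree < k ∧
      c = (∑ j ∈ range k, X ^ (m * j)) * w₁ + (∑ j ∈ range m, X ^ (k * j)) * w₂ := by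
  obtain ⟨a, b, hab⟩ := isCoprime_geom_sum (F := F) hmk
  obtain ⟨r, rfl⟩ := hc
  have h₁ : g * ∑ i ∈ range k, X ^ i = ∑ j ∈ range k, X ^ (m * j) :=
    mul_geom_sum_eq_sum_X_pow_mul hm (by rw [mul_comm k m]; linear_combination hg)
  have h₂ := mul_geom_sum_eq_sum_X_pow_mul hk hg
  have hmon : ∀ {t : ℕ}, 0 < t → (X ^ t - 1 : F[X]).Monic := fun ht => by
    simpa using monic_X_pow_sub_C (1 : F) ht.ne'
  have hdegX : ∀ {t : ℕ}, 0 < t → (X ^ t - 1 : F[X]).degree = t := fun ht => by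
    simpa using degree_X_pow_sub_C ht (1 : F)
  set w₁ := (b * r) %ₘ (X ^ m - 1)
  set w₂ := (a * r) %ₘ (X ^ k - 1)
  have hw₁ : w₁.degree < m := hdegX hm ▸ degree_modByMonic_lt _ (hmon hm)
  have hw₂ : w₂.degree < k := hdegX hk ▸ degree_modByMonic_lt _ (hmon hk)
  refine ⟨w₁, w₂, hw₁, hw₂, ?_⟩
  -- By `hab`, `h₁` and `h₂`, `g * r = π₁ * (b * r) + π₂ * (a * r)` for the two sums `π₁`, `π₂` of the
  -- goal; replacing `b * r`, `a * r` by their remainders changes it by a multiple of `X^{mk} - 1`,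
  -- which vanishes for degree reasons.
  have hP₁ := sum_X_pow_mul_mul_X_pow_sub_one (R := F) m k
  have hP₂ := sum_X_pow_mul_mul_X_pow_sub_one (R := F) k m
  rw [mul_comm k m] at hP₂
  have hdvd : X ^ (m * k) - 1 ∣
      g * r - ((∑ j ∈ range k, X ^ (m * j)) * w₁ + (∑ j ∈ range m, X ^ (k * j)) * w₂) := by
    refine ⟨(b * r) /ₘ (X ^ m - 1) + (a * r) /ₘ (X ^ k - 1), ?_⟩
    linear_combination (-g * r) * hab + a * r * h₂ + b * r * h₁
      - (∑ j ∈ range k, X ^ (m * j)) * modByMonic_add_div (b * r) (X ^ m - 1)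
      - (∑ j ∈ range m, X ^ (k * j)) * modByMonic_add_div (a * r) (X ^ k - 1)
      + (b * r) /ₘ (X ^ m - 1) * hP₁ + (a * r) /ₘ (X ^ k - 1) * hP₂
  refine sub_eq_zero.mp (eq_zero_of_dvd_of_degree_lt hdvd ?_)
  rw [hdegX (Nat.mul_pos hm hk)]
  refine (degree_sub_le _ _).trans_lt (max_lt hdeg ((degree_add_le _ _).trans_lt (max_lt
    (degree_sum_X_pow_mul_mul_lt hw₁) ?_)))
  simpa only [mul_comm k m] using degree_sum_X_pow_mul_mul_lt (k := m) hw₂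

theorem exists_dvd_card_support_eq (hm : 0 < m) (hk : 0 < k)
    (hg : g * ((X ^ m - 1) * (X ^ k - 1)) = (X ^ (m * k) - 1) * (X - 1)) :
    ∃ c : F[X], g ∣ c ∧ c.natDegree < m * k ∧ c ≠ 0 ∧ #c.support = m := by
  have hcard := card_support_sum_X_pow_mul (R := F) hk m
  have hc0 : ∑ j ∈ range m, (X : F[X]) ^ (k * j) ≠ 0 := by
    rintro h; rw [h, support_zero, card_empty] at hcard; omega
  refine ⟨_, Dvd.intro _ (mul_geom_sum_eq_sum_X_pow_mul hk hg), ?_, hc0, hcard⟩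
  rw [natDegree_lt_iff_degree_lt hc0, mul_comm m k]
  simpa using degree_sum_X_pow_mul_mul_lt (k := m) (p := (1 : F[X])) (by simpa using hk)

theorem finrank_span_dvd_natDegree_lt (hg : g ≠ 0) {n : ℕ} (hgn : g.natDegree ≤ n) (hn : 0 < n) :
    Module.finrank F (Submodule.span F {c : F[X] | g ∣ c ∧ c.natDegree < n}) = n - g.natDegree := by
  have hset : {c : F[X] | g ∣ c ∧ c.natDegree < n} =
      Submodule.map (LinearMap.mulLeft F g) (degreeLT F (n - g.natDegree)) := by
    ext c
    simp only [Set.mem_ofPred_eq, SetLike.mem_coe, Submodule.mem_map, mem_degreeLT,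
      LinearMap.mulLeft_apply]
    constructor
    · rintro ⟨⟨r, rfl⟩, hr⟩
      refine ⟨r, ?_, rfl⟩
      rcases eq_or_ne r 0 with rfl | hr0
      · simp
      · rw [natDegree_mul hg hr0] at hr
        exact (natDegree_lt_iff_degree_lt hr0).mp (by omega)
    · rintro ⟨r, hr, rfl⟩
      refine ⟨dvd_mul_right g r, ?_⟩
      rcases eq_or_ne r 0 with rfl | hr0
      · simpa using hn
      · have := (natDegree_lt_iff_degree_lt hr0).mpr hr
        rw [natDegree_mul hg hr0]
        omega
  have hinj : Function.Injective (LinearMap.mulLeft F g) := fun _ _ h => mul_left_cancel₀ hg h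
  rw [hset, Submodule.span_eq, ← LinearEquiv.finrank_eq (Submodule.equivMapOfInjective _ hinj _),
    Module.finrank_eq_card_basis (degreeLT.basis F _), Fintype.card_fin]

theorem finrank_span_dvd_of_mul_eq (hm : 0 < m) (hk : 0 < k)
    (hg : g * ((X ^ m - 1) * (X ^ k - 1)) = (X ^ (m * k) - 1) * (X - 1)) :
    Module.finrank F (Submodule.span F {c : F[X] | g ∣ c ∧ c.natDegree < m * k}) = m + k - 1 := by
  have hX : ∀ {t : ℕ}, 0 < t → (X ^ t - 1 : F[X]) ≠ 0 ∧ (X ^ t - 1 : F[X]).natDegree = t :=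
    fun ht => ⟨by simpa using X_pow_sub_C_ne_zero ht (1 : F),
      by simpa using natDegree_X_pow_sub_C (n := _) (r := (1 : F))⟩
  have hmk := Nat.mul_pos hm hk
  have hX1 : (X - 1 : F[X]) ≠ 0 ∧ (X - 1 : F[X]).natDegree = 1 := by
    simpa only [pow_one] using hX one_pos
  have hg0 : g ≠ 0 := by
    rintro rfl
    exact mul_ne_zero (hX hmk).1 hX1.1 (by simpa using hg.symm)
  have hdeg := congrArg natDegree hg
  rw [natDegree_mul hg0 (mul_ne_zero (hX hm).1 (hX hk).1), natDegree_mul (hX hm).1 (hX hk).1,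
    natDegree_mul (hX hmk).1 hX1.1, (hX hm).2, (hX hk).2, (hX hmk).2, hX1.2] at hdeg
  rw [finrank_span_dvd_natDegree_lt hg0 (by omega) hmk]
  omega

end Field
end Polynomial

theorem cyclic_code_two_factors_general {F : Type*} [Field F]
    (n₁ n₂ n : ℕ)
    (hp₁ : n₁.Prime) (hp₂ : n₂.Prime) (hne : n₁ ≠ n₂)
    (hn : n = n₁ * n₂)
    (g : F[X]) (hg : g * ((X ^ n₁ - 1) * (X ^ n₂ - 1)) = (X ^ n - 1) * (X - 1)) :
    Module.finrank F
        (Submodule.span F {c : F[X] | g ∣ c ∧ c.natDegree < n}) = n₁ + n₂ - 1 ∧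
      (∀ c : F[X], g ∣ c → c.natDegree < n → c ≠ 0 → min n₁ n₂ ≤ c.support.card) ∧
      (∃ c : F[X], g ∣ c ∧ c.natDegree < n ∧ c ≠ 0 ∧ c.support.card = min n₁ n₂) := by
  subst hn
  have hcop : n₁.Coprime n₂ := (Nat.coprime_primes hp₁ hp₂).mpr hne
  have hg' : g * ((X ^ n₂ - 1) * (X ^ n₁ - 1)) = (X ^ (n₂ * n₁) - 1) * (X - 1) := by
    rw [mul_comm n₂]; linear_combination hg
  refine ⟨finrank_span_dvd_of_mul_eq hp₁.pos hp₂.pos hg, fun c hc hdeg hc0 => ?_, ?_⟩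
  · have hdeg' := (natDegree_lt_iff_degree_lt hc0).mp hdeg
    obtain ⟨w₁, w₂, hw₁, hw₂, rfl⟩ :=
      exists_eq_sum_X_pow_mul_mul_add hp₁.pos hp₂.pos hcop hg hc hdeg'
    refine min_le_card_support_of_coeff_eq_add (v := w₁) (w := w₂) hcop hc0 hdeg' fun i hi => ?_
    rw [coeff_add, coeff_sum_X_pow_mul_mul hw₁, coeff_sum_X_pow_mul_mul hw₂, if_pos hi,
      if_pos (mul_comm n₁ n₂ ▸ hi)]
  · rcases le_total n₁ n₂ with h | h
    · simpa only [min_eq_left h] using exists_dvd_card_support_eq hp₁.pos hp₂.pos hg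
    · simpa only [min_eq_right h, mul_comm n₂ n₁] using
        exists_dvd_card_support_eq hp₂.pos hp₁.pos hg'

/-- The cyclic code of length `n = n₁n₂` over `GF(q)` with generator polynomial
`g(x) = (x^n-1)(x-1)/((x^{n₁}-1)(x^{n₂}-1))` has dimension `n₁ + n₂ - 1` and minimum
distance `min(n₁, n₂)`. -/
theorem cyclic_code_two_factors {F : Type*} [Field F] [Fintype F]
    (q n₁ n₂ n : ℕ) (hq : Fintype.card F = q)
    (hp₁ : n₁.Prime) (hp₂ : n₂.Prime) (ho₁ : Odd n₁) (ho₂ : Odd n₂) (hne : n₁ ≠ n₂)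
    (hn : n = n₁ * n₂) (hcop : Nat.Coprime n q)
    (g : F[X]) (hg : g * ((X ^ n₁ - 1) * (X ^ n₂ - 1)) = (X ^ n - 1) * (X - 1)) :
    Module.finrank F
        (Submodule.span F {c : F[X] | g ∣ c ∧ c.natDegree < n}) = n₁ + n₂ - 1 ∧
      (∀ c : F[X], g ∣ c → c.natDegree < n → c ≠ 0 → min n₁ n₂ ≤ c.support.card) ∧
      (∃ c : F[X], g ∣ c ∧ c.natDegree < n ∧ c ≠ 0 ∧ c.support.card = min n₁ n₂) :=
  cyclic_code_two_factors_general n₁ n₂ n hp₁ hp₂ hne hn g hg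
end
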